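/- arXiv:2101.07781 — 10 statements merged into one kernel-verified Lean document; each statement's English description precedes it below -/
import Mathlib

section
/- The Fenchel dual of the problem: maximize Σ_a π_t(a) δ(a) subject to Σ_a π_b(a) δ(a)² ≤ 1/(8n) and 0 ≤ δ(a) ≤ 1/2 for all a, is the unconstrained convex problem: minimize over v ∈ R^k of sqrt( (1/(8n)) Σ_a (π_t(a)−v(a))²/π_b(a) ) + (1/2) Σ_a |v(a)|; moreover these two problems have the same optimal value. -/
open Finset

/-- Scalar identity: the clipped primal solution matches the dual slack. -/
private lemma fd_scalar (p q c : ℝ) (hp : 0 < p) (hq : 0 ≤ q) (hc : 0 < c) :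
    q - max (q - p / (2 * c)) 0 = min q (p / (2 * c)) ∧
    min (c * q / p) (1 / 2) = c * min q (p / (2 * c)) / p ∧
    max (q - p / (2 * c)) 0 * min (c * q / p) (1 / 2)
      = |max (q - p / (2 * c)) 0| * (1 / 2) := by
  rcases le_total q (p / (2 * c)) with h | h
  · have h1 : max (q - p / (2 * c)) 0 = 0 := max_eq_right (by linarith)
    have h2 : min q (p / (2 * c)) = q := min_eq_left h
    have h3 : c * q / p ≤ 1 / 2 := by
      rw [div_le_div_iff₀ hp (by norm_num)]
      have h' : q * (2 * c) ≤ p := (le_div_iff₀ (by positivity)).1 h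
      nlinarith
    refine ⟨by rw [h1, h2]; ring, by rw [h2, min_eq_left h3], by rw [h1]; simp⟩
  · have h1 : max (q - p / (2 * c)) 0 = q - p / (2 * c) := max_eq_left (by linarith)
    have h2 : min q (p / (2 * c)) = p / (2 * c) := min_eq_right h
    have h3 : (1:ℝ) / 2 ≤ c * q / p := by
      rw [div_le_div_iff₀ (by norm_num) hp]
      have h' : p ≤ q * (2 * c) := (div_le_iff₀ (by positivity)).1 h
      nlinarith
    have h4 : c * (p / (2 * c)) / p = 1 / 2 := by field_simp
    have h5 : min (c * q / p) (1/2) = 1/2 := min_eq_right h3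
    refine ⟨by rw [h1, h2]; ring, by rw [h2, h4, h5], ?_⟩
    rw [h1, h5, abs_of_nonneg (by linarith)]

/-- Strong duality in the case where the quadratic constraint is active:
given `c > 0` with `∑ πb (min (c πt/πb) (1/2))² = ε`, the clipped primal point and
the corresponding dual point have equal values. -/
private lemma fd_strong (k : ℕ) (πb πt : Fin k → ℝ)
    (hπb0 : ∀ a, 0 < πb a) (hπt0 : ∀ a, 0 ≤ πt a)
    (ε c : ℝ) (hc : 0 < c)
    (hgc : ∑ a, πb a * (min (c * πt a / πb a) (1 / 2)) ^ 2 = ε) :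
    ∃ x : ℝ, (∃ δ : Fin k → ℝ,
        (∀ a, 0 ≤ δ a ∧ δ a ≤ 1 / 2) ∧
        (∑ a, πb a * δ a ^ 2 ≤ ε) ∧
        x = ∑ a, πt a * δ a) ∧
      ∃ v : Fin k → ℝ,
        Real.sqrt (ε * ∑ a, (πt a - v a) ^ 2 / πb a) + (1 / 2) * ∑ a, |v a| ≤ x := by
  set δ : Fin k → ℝ := fun a => min (c * πt a / πb a) (1 / 2) with hδ
  set v : Fin k → ℝ := fun a => max (πt a - πb a / (2 * c)) 0 with hv
  have hsc := fun a => fd_scalar (πb a) (πt a) c (hπb0 a) (hπt0 a) hc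
  have hw : ∀ a, πt a - v a = min (πt a) (πb a / (2 * c)) := fun a => (hsc a).1
  have hδw : ∀ a, δ a = c * (πt a - v a) / πb a := fun a => by
    rw [hw a]; exact (hsc a).2.1
  set A : ℝ := ∑ a, (πt a - v a) ^ 2 / πb a with hA
  have hA0 : 0 ≤ A := sum_nonneg fun a _ => div_nonneg (sq_nonneg _) (hπb0 a).le
  have hεA : ε = c ^ 2 * A := by
    rw [← hgc, hA, Finset.mul_sum]
    refine Finset.sum_congr rfl fun a _ => ?_
    have hpa := (hπb0 a).ne'
    rw [show min (c * πt a / πb a) (1/2) = δ a from rfl, hδw a]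
    field_simp
  have hsplit : ∑ a, πt a * δ a = c * A + (1 / 2) * ∑ a, |v a| := by
    have e1 : ∀ a, πt a * δ a = (πt a - v a) * δ a + v a * δ a := fun a => by ring
    rw [Finset.sum_congr rfl fun a _ => e1 a, Finset.sum_add_distrib]
    congr 1
    · rw [hA, Finset.mul_sum]
      refine Finset.sum_congr rfl fun a _ => ?_
      have hpa := (hπb0 a).ne'
      rw [hδw a]; field_simp
    · rw [Finset.mul_sum]
      refine Finset.sum_congr rfl fun a _ => ?_
      have := (hsc a).2.2
      rw [show v a * δ a = max (πt a - πb a / (2*c)) 0 * min (c * πt a / πb a) (1/2) from rfl,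
        this]
      rw [show |max (πt a - πb a / (2*c)) 0| = |v a| from rfl]
      ring
  refine ⟨∑ a, πt a * δ a, ⟨δ, fun a =>
      ⟨le_min (div_nonneg (mul_nonneg hc.le (hπt0 a)) (hπb0 a).le) (by norm_num),
        min_le_right _ _⟩,
      hgc.le, rfl⟩, v, ?_⟩
  have hsqrt : Real.sqrt (ε * A) = c * A := by
    rw [hεA, show c ^ 2 * A * A = (c * A) ^ 2 by ring, Real.sqrt_sq (mul_nonneg hc.le hA0)]
  rw [hsplit, ← hA, hsqrt]

/-- Fenchel duality for the two-point lower bound program (Lemma on duality):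
the constrained maximization over δ and the unconstrained minimization over v
share the same optimal value. -/
theorem fenchel_dual_optimal_value
    (k n : ℕ) (hn : 0 < n)
    (πb πt : Fin k → ℝ)
    (hπb0 : ∀ a, 0 < πb a) (hπb1 : ∑ a, πb a = 1)
    (hπt0 : ∀ a, 0 ≤ πt a) (hπt1 : ∑ a, πt a = 1) :
    sSup {x : ℝ | ∃ δ : Fin k → ℝ,
        (∀ a, 0 ≤ δ a ∧ δ a ≤ 1 / 2) ∧
        (∑ a, πb a * δ a ^ 2 ≤ 1 / (8 * (n : ℝ))) ∧
        x = ∑ a, πt a * δ a}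
      = ⨅ v : Fin k → ℝ,
          (Real.sqrt ((1 / (8 * (n : ℝ))) * ∑ a, (πt a - v a) ^ 2 / πb a)
            + (1 / 2) * ∑ a, |v a|) := by
  have hε0 : (0:ℝ) < 1 / (8 * (n : ℝ)) := by positivity
  set ε : ℝ := 1 / (8 * (n : ℝ)) with hεdef
  set D : (Fin k → ℝ) → ℝ := fun v =>
    Real.sqrt (ε * ∑ a, (πt a - v a) ^ 2 / πb a) + (1 / 2) * ∑ a, |v a| with hD
  set P : Set ℝ := {x : ℝ | ∃ δ : Fin k → ℝ,
        (∀ a, 0 ≤ δ a ∧ δ a ≤ 1 / 2) ∧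
        (∑ a, πb a * δ a ^ 2 ≤ ε) ∧
        x = ∑ a, πt a * δ a} with hP
  -- weak duality
  have weak : ∀ x ∈ P, ∀ v, x ≤ D v := by
    rintro x ⟨δ, hbox, hcon, rfl⟩ v
    have hA0 : 0 ≤ ∑ a, (πt a - v a) ^ 2 / πb a :=
      sum_nonneg fun a _ => div_nonneg (sq_nonneg _) (hπb0 a).le
    have hsplit : ∑ a, πt a * δ a = (∑ a, (πt a - v a) * δ a) + ∑ a, v a * δ a := by
      rw [← Finset.sum_add_distrib]
      exact Finset.sum_congr rfl fun a _ => by ring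
    have hcs : ∑ a, (πt a - v a) * δ a ≤
        Real.sqrt (∑ a, (πt a - v a) ^ 2 / πb a) * Real.sqrt (∑ a, πb a * δ a ^ 2) := by
      have h := Real.sum_mul_le_sqrt_mul_sqrt Finset.univ
        (fun a => (πt a - v a) / Real.sqrt (πb a)) (fun a => Real.sqrt (πb a) * δ a)
      have e1 : ∀ a : Fin k, (πt a - v a) / Real.sqrt (πb a) * (Real.sqrt (πb a) * δ a)
          = (πt a - v a) * δ a := fun a => by
        have hs : Real.sqrt (πb a) ≠ 0 := (Real.sqrt_pos.mpr (hπb0 a)).ne'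
        field_simp
      have e2 : ∀ a : Fin k, ((πt a - v a) / Real.sqrt (πb a)) ^ 2
          = (πt a - v a) ^ 2 / πb a := fun a => by
        rw [div_pow, Real.sq_sqrt (hπb0 a).le]
      have e3 : ∀ a : Fin k, (Real.sqrt (πb a) * δ a) ^ 2 = πb a * δ a ^ 2 := fun a => by
        rw [mul_pow, Real.sq_sqrt (hπb0 a).le]
      simp only [e1, e2, e3] at h
      exact h
    have hcs2 : Real.sqrt (∑ a, (πt a - v a) ^ 2 / πb a) * Real.sqrt (∑ a, πb a * δ a ^ 2)
        ≤ Real.sqrt (ε * ∑ a, (πt a - v a) ^ 2 / πb a) := by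
      rw [mul_comm ε, Real.sqrt_mul hA0]
      exact mul_le_mul_of_nonneg_left (Real.sqrt_le_sqrt hcon) (Real.sqrt_nonneg _)
    have hlin : ∑ a, v a * δ a ≤ (1 / 2) * ∑ a, |v a| := by
      rw [Finset.mul_sum]
      refine Finset.sum_le_sum fun a _ => ?_
      calc v a * δ a ≤ |v a| * δ a :=
            mul_le_mul_of_nonneg_right (le_abs_self _) (hbox a).1
        _ ≤ |v a| * (1 / 2) := mul_le_mul_of_nonneg_left (hbox a).2 (abs_nonneg _)
        _ = 1 / 2 * |v a| := mul_comm _ _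
    have : ∑ a, πt a * δ a ≤ Real.sqrt (ε * ∑ a, (πt a - v a) ^ 2 / πb a)
        + (1 / 2) * ∑ a, |v a| := by
      rw [hsplit]; exact add_le_add (hcs.trans hcs2) hlin
    exact this
  -- basic facts
  have hPne : P.Nonempty := by
    refine ⟨0, fun _ => 0, fun a => by norm_num, by simpa using hε0.le, by simp⟩
  have hPbdd : BddAbove P := ⟨D 0, fun x hx => weak x hx 0⟩
  have hDbdd : BddBelow (Set.range D) := by
    refine ⟨0, ?_⟩
    rintro y ⟨v, rfl⟩
    have h1 : (0:ℝ) ≤ ∑ a, |v a| := sum_nonneg fun a _ => abs_nonneg _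
    have h2 := Real.sqrt_nonneg (ε * ∑ a, (πt a - v a) ^ 2 / πb a)
    simp only [hD]
    linarith
  -- existence of a support point
  have hex : ∃ a, 0 < πt a := by
    by_contra h
    push_neg at h
    have : (1:ℝ) = 0 := by
      rw [← hπt1]; exact Finset.sum_eq_zero fun a _ => le_antisymm (h a) (hπt0 a)
    norm_num at this
  obtain ⟨a₀, ha₀⟩ := hex
  -- strong duality: find a primal point x and dual point v with D v ≤ x
  have strong : ∃ x ∈ P, ∃ v, D v ≤ x := by
    set C : ℝ := Finset.univ.sup' ⟨a₀, Finset.mem_univ a₀⟩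
      (fun a => πb a / (2 * πt a)) with hC
    have hCge : ∀ a, πb a / (2 * πt a) ≤ C := fun a =>
      Finset.le_sup' (fun b => πb b / (2 * πt b)) (Finset.mem_univ a)
    have hC0 : 0 < C :=
      lt_of_lt_of_le (div_pos (hπb0 a₀) (by linarith)) (hCge a₀)
    have hδhalf : ∀ a, 0 < πt a → min (C * πt a / πb a) (1 / 2) = 1 / 2 := by
      intro a ha
      refine min_eq_right ?_
      rw [div_le_div_iff₀ (by norm_num) (hπb0 a)]
      have h : πb a ≤ C * (2 * πt a) := (div_le_iff₀ (by positivity)).1 (hCge a)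
      nlinarith
    set g : ℝ → ℝ := fun c => ∑ a, πb a * (min (c * πt a / πb a) (1 / 2)) ^ 2 with hg
    rcases le_total (g C) ε with hcase | hcase
    · -- constraint slack at the top: primal value 1/2, dual v = πt
      refine ⟨∑ a, πt a * min (C * πt a / πb a) (1 / 2),
        ⟨fun a => min (C * πt a / πb a) (1 / 2),
          fun a => ⟨le_min (div_nonneg (mul_nonneg hC0.le (hπt0 a)) (hπb0 a).le) (by norm_num),
            min_le_right _ _⟩, hcase, rfl⟩,
        πt, ?_⟩
      have hval : ∑ a, πt a * min (C * πt a / πb a) (1 / 2) = 1 / 2 := by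
        have : ∀ a : Fin k, πt a * min (C * πt a / πb a) (1 / 2) = πt a * (1 / 2) := by
          intro a
          rcases eq_or_lt_of_le (hπt0 a) with h | h
          · rw [← h]; ring
          · rw [hδhalf a h]
        rw [Finset.sum_congr rfl fun a _ => this a, ← Finset.sum_mul, hπt1]; ring
      have hdval : D πt = 1 / 2 := by
        simp only [hD]
        have : ∀ a : Fin k, (πt a - πt a) ^ 2 / πb a = 0 := fun a => by simp
        rw [Finset.sum_congr rfl fun a _ => this a]
        simp only [Finset.sum_const_zero, mul_zero, Real.sqrt_zero, zero_add]
        rw [Finset.sum_congr rfl fun a (_ : a ∈ Finset.univ) => abs_of_nonneg (hπt0 a), hπt1]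
        ring
      rw [hdval, hval]
    · -- constraint active: intermediate value theorem gives the critical c
      have hgcont : Continuous g := by
        apply continuous_finset_sum
        intro a _
        exact continuous_const.mul
          ((((continuous_id.mul continuous_const).div_const _).min continuous_const).pow 2)
      have hg0 : g 0 = 0 := by
        simp [hg]
      have hmem : ε ∈ Set.Icc (g 0) (g C) := ⟨by rw [hg0]; exact hε0.le, hcase⟩
      obtain ⟨c, hcmem, hgc⟩ := intermediate_value_Icc hC0.le hgcont.continuousOn hmem
      have hc0 : 0 < c := by
        rcases eq_or_lt_of_le hcmem.1 with h | h
        · exfalso; rw [← h] at hgc; rw [hg0] at hgc; exact hε0.ne' hgc.symm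
        · exact h
      obtain ⟨x, hxP, v, hDv⟩ := fd_strong k πb πt hπb0 hπt0 ε c hc0 hgc
      exact ⟨x, hxP, v, hDv⟩
  refine le_antisymm (csSup_le hPne fun x hx => le_ciInf fun v => weak x hx v) ?_
  obtain ⟨x, hxP, v, hDv⟩ := strong
  exact le_trans (ciInf_le hDbdd v) (le_trans hDv (le_csSup hPbdd hxP))
end

section
/- Let v* minimize F(v) = sqrt( (1/(8n)) Σ_a (π_t(a)−v(a))²/π_b(a) ) + (1/2) Σ_a |v(a)| over R^k, and let S* = supp(v*). Then the minimum value of F is comparable, up to universal constant factors, to π_t(S*) + sqrt( (1/n) Σ_{a∉S*} π_b(a) ρ(a)² ), where ρ(a) = π_t(a)/π_b(a). -/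
open scoped Classical

set_option maxHeartbeats 1000000 in
/-- Lemma (minimum value): the minimum of the dual objective F is comparable,
up to universal constants, to π_t(S*) + sqrt((1/n) ∑_{a ∉ S*} π_b(a) ρ(a)²),
where S* is the support of a minimizer. -/
theorem dual_min_value_characterization :
    ∃ c C : ℝ, 0 < c ∧ 0 < C ∧
      ∀ (k n : ℕ), 0 < n →
      ∀ (πb πt : Fin k → ℝ),
        (∀ a, 0 ≤ πb a) → (∑ a, πb a = 1) →
        (∀ a, 0 ≤ πt a) → (∑ a, πt a = 1) →
      ∀ vstar : Fin k → ℝ,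
        (∀ v : Fin k → ℝ,
          Real.sqrt ((1 / (8 * (n : ℝ))) * ∑ a, (πt a - vstar a) ^ 2 / πb a)
              + (1 / 2) * ∑ a, |vstar a|
            ≤ Real.sqrt ((1 / (8 * (n : ℝ))) * ∑ a, (πt a - v a) ^ 2 / πb a)
              + (1 / 2) * ∑ a, |v a|) →
        (c * ((∑ a ∈ Finset.univ.filter fun a => vstar a ≠ 0, πt a)
              + Real.sqrt ((1 / (n : ℝ)) *
                  ∑ a ∈ Finset.univ.filter fun a => vstar a = 0,
                    πb a * (πt a / πb a) ^ 2))
            ≤ Real.sqrt ((1 / (8 * (n : ℝ))) * ∑ a, (πt a - vstar a) ^ 2 / πb a)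
              + (1 / 2) * ∑ a, |vstar a|)
        ∧ (Real.sqrt ((1 / (8 * (n : ℝ))) * ∑ a, (πt a - vstar a) ^ 2 / πb a)
              + (1 / 2) * ∑ a, |vstar a|
            ≤ C * ((∑ a ∈ Finset.univ.filter fun a => vstar a ≠ 0, πt a)
              + Real.sqrt ((1 / (n : ℝ)) *
                  ∑ a ∈ Finset.univ.filter fun a => vstar a = 0,
                    πb a * (πt a / πb a) ^ 2))) := by
  refine ⟨1/5, 1, by norm_num, by norm_num, ?_⟩
  intro k n hn πb πt hb0 hb1 ht0 ht1 v hmin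
  have hn' : (0:ℝ) < n := by exact_mod_cast hn
  set Q : ℝ := ∑ a, (πt a - v a) ^ 2 / πb a with hQdef
  set S : ℝ := ∑ a, |v a| with hSdef
  set A : ℝ := Real.sqrt (1 / (8 * (n : ℝ)) * Q) with hAdef
  have hQ0 : 0 ≤ Q := Finset.sum_nonneg fun a _ => div_nonneg (sq_nonneg _) (hb0 a)
  have hA0 : 0 ≤ A := Real.sqrt_nonneg _
  have hAsq : A ^ 2 = 1 / (8 * (n : ℝ)) * Q := Real.sq_sqrt (by positivity)
  have hS0 : 0 ≤ S := Finset.sum_nonneg fun a _ => abs_nonneg _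
  -- splitting sums at a single coordinate
  have hsplit : ∀ (a : Fin k) (F : Fin k → ℝ → ℝ) (g : Fin k → ℝ),
      ∑ b, F b (g b) = F a (g a) + ∑ b ∈ Finset.univ.erase a, F b (g b) :=
    fun a F g => (Finset.add_sum_erase _ (fun b => F b (g b)) (Finset.mem_univ a)).symm
  have hupd : ∀ (a : Fin k) (F : Fin k → ℝ → ℝ) (x : ℝ),
      (∑ b, F b (Function.update v a x b))
        = F a x + ∑ b ∈ Finset.univ.erase a, F b (v b) := by
    intro a F x
    rw [hsplit a (fun b y => F b (Function.update v a x b)) v, Function.update_self]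
    congr 1
    exact Finset.sum_congr rfl fun b hb => by
      rw [Function.update_of_ne (Finset.ne_of_mem_erase hb)]
  -- minimality against a single-coordinate perturbation
  have hmin' : ∀ (a : Fin k) (x : ℝ),
      A + 1 / 2 * S ≤ Real.sqrt (1 / (8 * (n : ℝ)) *
          (Q - (πt a - v a) ^ 2 / πb a + (πt a - x) ^ 2 / πb a))
        + 1 / 2 * (S - |v a| + |x|) := by
    intro a x
    have h := hmin (Function.update v a x)
    have e1 : (∑ b, (πt b - Function.update v a x b) ^ 2 / πb b)
        = Q - (πt a - v a) ^ 2 / πb a + (πt a - x) ^ 2 / πb a := by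
      rw [hupd a (fun b y => (πt b - y) ^ 2 / πb b) x, hQdef,
        hsplit a (fun b y => (πt b - y) ^ 2 / πb b) v]
      ring
    have e2 : (∑ b, |Function.update v a x b|) = S - |v a| + |x| := by
      rw [hupd a (fun _ y => |y|) x, hSdef, hsplit a (fun _ y => |y|) v]
      ring
    rw [e1, e2] at h
    exact h
  -- the minimizer vanishes where πb vanishes
  have hpb : ∀ a, πb a = 0 → v a = 0 := by
    intro a hpa
    by_contra hva
    have h := hmin' a 0
    rw [hpa] at h
    simp only [div_zero, sub_zero, add_zero, abs_zero] at h
    rw [← hAdef] at h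
    have : 0 < |v a| := abs_pos.mpr hva
    linarith
  -- first-order condition at support points
  have hmain : ∀ a, v a ≠ 0 → 0 < v a ∧ 4 * (n:ℝ) * A * πb a ≤ πt a - v a := by
    intro a hva
    have hpa : 0 < πb a := (hb0 a).lt_of_ne fun h => hva (hpb a h.symm)
    by_cases hQz : Q = 0
    · have hA : A = 0 := by rw [hAdef, hQz]; simp
      have hterm : (πt a - v a) ^ 2 / πb a = 0 := by
        have h0 : ∑ b, (πt b - v b) ^ 2 / πb b = 0 := by rw [← hQdef]; exact hQz
        exact (Finset.sum_eq_zero_iff_of_nonneg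
          (fun b _ => div_nonneg (sq_nonneg _) (hb0 b))).mp h0 a (Finset.mem_univ a)
      have hveq : v a = πt a := by
        rcases div_eq_zero_iff.mp hterm with h | h
        · have := pow_eq_zero_iff (n := 2) (by norm_num) |>.mp h
          linarith
        · exact absurd h (ne_of_gt hpa)
      refine ⟨?_, ?_⟩
      · rcases (ht0 a).lt_or_eq with h | h
        · linarith [hveq]
        · exact absurd (hveq.trans h.symm) hva
      · rw [hA]; simp [hveq]
    · have hQpos : 0 < Q := hQ0.lt_of_ne (Ne.symm hQz)
      have hApos : 0 < A := by rw [hAdef]; exact Real.sqrt_pos.mpr (by positivity)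
      have key : ∀ x ε : ℝ, 0 < ε → |x| = |v a| - ε →
          8 * (n:ℝ) * A * πb a * ε ≤ (πt a - x) ^ 2 - (πt a - v a) ^ 2 := by
        intro x ε hε hxabs
        have h := hmin' a x
        rw [hxabs] at h
        have h2 : A + ε / 2 ≤ Real.sqrt (1 / (8 * (n : ℝ)) *
            (Q - (πt a - v a) ^ 2 / πb a + (πt a - x) ^ 2 / πb a)) := by linarith
        have hy0 : 0 ≤ 1 / (8 * (n : ℝ)) *
            (Q - (πt a - v a) ^ 2 / πb a + (πt a - x) ^ 2 / πb a) := by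
          by_contra hneg
          push_neg at hneg
          have := Real.sqrt_eq_zero_of_nonpos hneg.le
          rw [this] at h2
          linarith
        have hsq : (A + ε / 2) ^ 2 ≤ 1 / (8 * (n : ℝ)) *
            (Q - (πt a - v a) ^ 2 / πb a + (πt a - x) ^ 2 / πb a) := by
          have := pow_le_pow_left₀ (by positivity) h2 2
          rwa [Real.sq_sqrt hy0] at this
        have hmul := mul_le_mul_of_nonneg_right hsq
          (show (0:ℝ) ≤ 8 * (n:ℝ) * πb a by positivity)
        have hrhs : 1 / (8 * (n : ℝ)) *
              (Q - (πt a - v a) ^ 2 / πb a + (πt a - x) ^ 2 / πb a) * (8 * (n:ℝ) * πb a)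
            = Q * πb a + ((πt a - x) ^ 2 - (πt a - v a) ^ 2) := by
          field_simp
          ring
        rw [hrhs] at hmul
        have hQA : Q = 8 * (n:ℝ) * A ^ 2 := by rw [hAsq]; field_simp
        nlinarith [mul_nonneg (mul_nonneg hn'.le hpa.le) (sq_nonneg ε)]
      rcases hva.lt_or_gt with hneg | hpos
      · exfalso
        have key2 : ∀ ε : ℝ, 0 < ε → ε ≤ -v a →
            8 * (n:ℝ) * A * πb a ≤ ε - 2 * (πt a - v a) := by
          intro ε hε hεv
          have h := key (v a + ε) ε hε (by
            rw [abs_of_nonpos (by linarith), abs_of_neg hneg]; ring)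
          have hexp : (πt a - (v a + ε)) ^ 2 - (πt a - v a) ^ 2
              = ε * (ε - 2 * (πt a - v a)) := by ring
          rw [hexp] at h
          have := le_of_mul_le_mul_right (by linarith [h] :
            (8 * (n:ℝ) * A * πb a) * ε ≤ (ε - 2 * (πt a - v a)) * ε) hε
          linarith
        have hfin : 8 * (n:ℝ) * A * πb a ≤ - 2 * (πt a - v a) := by
          apply le_of_forall_pos_le_add
          intro ε hε
          have h := key2 (min ε (-v a)) (lt_min hε (by linarith)) (min_le_right _ _)
          have : min ε (-v a) ≤ ε := min_le_left _ _
          linarith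
        nlinarith [mul_pos (mul_pos (mul_pos (by norm_num : (0:ℝ) < 8) hn') hApos) hpa,
          ht0 a]
      · refine ⟨hpos, ?_⟩
        have key2 : ∀ ε : ℝ, 0 < ε → ε ≤ v a →
            8 * (n:ℝ) * A * πb a ≤ 2 * (πt a - v a) + ε := by
          intro ε hε hεv
          have h := key (v a - ε) ε hε (by
            rw [abs_of_nonneg (by linarith), abs_of_pos hpos])
          have hexp : (πt a - (v a - ε)) ^ 2 - (πt a - v a) ^ 2
              = ε * (2 * (πt a - v a) + ε) := by ring
          rw [hexp] at h
          have := le_of_mul_le_mul_right (by linarith [h] :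
            (8 * (n:ℝ) * A * πb a) * ε ≤ (2 * (πt a - v a) + ε) * ε) hε
          linarith
        have hfin : 8 * (n:ℝ) * A * πb a ≤ 2 * (πt a - v a) := by
          apply le_of_forall_pos_le_add
          intro ε hε
          have h := key2 (min ε (v a)) (lt_min hε hpos) (min_le_right _ _)
          have : min ε (v a) ≤ ε := min_le_left _ _
          linarith
        linarith
  -- assembly
  set P : ℝ := ∑ a ∈ Finset.univ.filter fun a => v a ≠ 0, πt a with hPdef
  set X : ℝ := ∑ a ∈ Finset.univ.filter fun a => v a = 0, πb a * (πt a / πb a) ^ 2 with hXdef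
  have hX0 : 0 ≤ X := Finset.sum_nonneg fun a _ => mul_nonneg (hb0 a) (sq_nonneg _)
  have hP0 : 0 ≤ P := Finset.sum_nonneg fun a _ => ht0 a
  have hu : ∑ a ∈ Finset.univ.filter fun a => v a ≠ 0, (πt a - v a) ≤ 2 * A := by
    by_cases hQz : Q = 0
    · have h0 : ∑ b, (πt b - v b) ^ 2 / πb b = 0 := by rw [← hQdef]; exact hQz
      have hz : ∀ a ∈ Finset.univ.filter fun a => v a ≠ 0, πt a - v a = 0 := by
        intro a ha
        have hva : v a ≠ 0 := (Finset.mem_filter.mp ha).2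
        have hpa : 0 < πb a := (hb0 a).lt_of_ne fun h => hva (hpb a h.symm)
        have hterm := (Finset.sum_eq_zero_iff_of_nonneg
          (fun b _ => div_nonneg (sq_nonneg _) (hb0 b))).mp h0 a (Finset.mem_univ a)
        rcases div_eq_zero_iff.mp hterm with h | h
        · exact pow_eq_zero_iff (n := 2) (by norm_num) |>.mp h
        · exact absurd h (ne_of_gt hpa)
      rw [Finset.sum_eq_zero hz]
      positivity
    · have hQpos : 0 < Q := hQ0.lt_of_ne (Ne.symm hQz)
      have hApos : 0 < A := by rw [hAdef]; exact Real.sqrt_pos.mpr (by positivity)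
      have hsum1 : ∀ a ∈ Finset.univ.filter fun a => v a ≠ 0,
          4 * (n:ℝ) * A * (πt a - v a) ≤ (πt a - v a) ^ 2 / πb a := by
        intro a ha
        have hva : v a ≠ 0 := (Finset.mem_filter.mp ha).2
        have hpa : 0 < πb a := (hb0 a).lt_of_ne fun h => hva (hpb a h.symm)
        obtain ⟨hvpos, hub⟩ := hmain a hva
        have hu0 : 0 ≤ πt a - v a := le_trans (by positivity) hub
        have hdiv : 4 * (n:ℝ) * A ≤ (πt a - v a) / πb a :=
          (le_div_iff₀ hpa).mpr hub
        calc 4 * (n:ℝ) * A * (πt a - v a) ≤ ((πt a - v a) / πb a) * (πt a - v a) :=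
              mul_le_mul_of_nonneg_right hdiv hu0
          _ = (πt a - v a) ^ 2 / πb a := by ring
      have hsum2 : ∑ a ∈ Finset.univ.filter fun a => v a ≠ 0,
          (πt a - v a) ^ 2 / πb a ≤ Q := by
        rw [hQdef]
        exact Finset.sum_le_sum_of_subset_of_nonneg (Finset.filter_subset _ _)
          (fun a _ _ => div_nonneg (sq_nonneg _) (hb0 a))
      have h3 : 4 * (n:ℝ) * A *
          (∑ a ∈ Finset.univ.filter fun a => v a ≠ 0, (πt a - v a)) ≤ Q := by
        rw [Finset.mul_sum]
        exact le_trans (Finset.sum_le_sum hsum1) hsum2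
      have hQA : Q = 8 * (n:ℝ) * A ^ 2 := by rw [hAsq]; field_simp
      have h4 : 4 * (n:ℝ) * A * (∑ a ∈ Finset.univ.filter fun a => v a ≠ 0, (πt a - v a))
          ≤ 4 * (n:ℝ) * A * (2 * A) := by rw [hQA] at h3; linarith
      exact le_of_mul_le_mul_left h4 (by positivity)
  have hP1 : P ≤ 2 * A + S := by
    have e : P = (∑ a ∈ Finset.univ.filter fun a => v a ≠ 0, (πt a - v a))
        + ∑ a ∈ Finset.univ.filter fun a => v a ≠ 0, v a := by
      rw [hPdef, ← Finset.sum_add_distrib]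
      exact Finset.sum_congr rfl fun a _ => by ring
    have hv : ∑ a ∈ Finset.univ.filter fun a => v a ≠ 0, v a ≤ S := by
      rw [hSdef]
      exact le_trans (Finset.sum_le_sum fun a _ => le_abs_self _)
        (Finset.sum_le_sum_of_subset_of_nonneg (Finset.filter_subset _ _)
          (fun a _ _ => abs_nonneg _))
    linarith [hu]
  have hXQ : X ≤ Q := by
    have h1 : X ≤ ∑ a ∈ Finset.univ.filter fun a => v a = 0, (πt a - v a) ^ 2 / πb a := by
      apply Finset.sum_le_sum
      intro a ha
      have hva : v a = 0 := (Finset.mem_filter.mp ha).2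
      rcases (hb0 a).eq_or_lt with hp | hp
      · rw [← hp]
        simp
      · rw [hva, sub_zero]
        apply le_of_eq
        field_simp
    refine le_trans h1 ?_
    rw [hQdef]
    exact Finset.sum_le_sum_of_subset_of_nonneg (Finset.filter_subset _ _)
      (fun a _ _ => div_nonneg (sq_nonneg _) (hb0 a))
  have hnQ : (1 / (n:ℝ)) * Q = 8 * (1 / (8 * (n:ℝ)) * Q) := by field_simp
  have h8 : Real.sqrt 8 ≤ 3 := by
    nlinarith [Real.sq_sqrt (show (0:ℝ) ≤ 8 by norm_num), Real.sqrt_nonneg 8]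
  have hT : Real.sqrt ((1 / (n:ℝ)) * X) ≤ 3 * A := by
    have h1 : Real.sqrt ((1 / (n:ℝ)) * X) ≤ Real.sqrt ((1 / (n:ℝ)) * Q) :=
      Real.sqrt_le_sqrt (by
        apply mul_le_mul_of_nonneg_left hXQ (by positivity))
    rw [hnQ, Real.sqrt_mul (by norm_num : (0:ℝ) ≤ 8), ← hAdef] at h1
    calc Real.sqrt ((1 / (n:ℝ)) * X) ≤ Real.sqrt 8 * A := h1
      _ ≤ 3 * A := mul_le_mul_of_nonneg_right h8 hA0
  have hT0 : 0 ≤ Real.sqrt ((1 / (n:ℝ)) * X) := Real.sqrt_nonneg _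
  constructor
  · linarith [hP1, hT, hA0, hS0]
  · -- upper bound via the candidate w = πt on the support, 0 elsewhere
    set w : Fin k → ℝ := fun b => if v b = 0 then 0 else πt b with hwdef
    have h := hmin w
    have e1 : (∑ b, (πt b - w b) ^ 2 / πb b) = X := by
      rw [← Finset.sum_filter_add_sum_filter_not Finset.univ (fun b => v b = 0)]
      have hz : ∑ b ∈ Finset.univ.filter fun b => ¬ v b = 0,
          (πt b - w b) ^ 2 / πb b = 0 := by
        apply Finset.sum_eq_zero
        intro b hb
        have hvb : ¬ v b = 0 := (Finset.mem_filter.mp hb).2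
        simp [hwdef, hvb]
      rw [hz, add_zero, hXdef]
      apply Finset.sum_congr rfl
      intro b hb
      have hvb : v b = 0 := (Finset.mem_filter.mp hb).2
      rcases (hb0 b).eq_or_lt with hp | hp
      · rw [← hp]; simp
      · simp only [hwdef, hvb, if_pos, sub_zero]
        field_simp
    have e2 : (∑ b, |w b|) = P := by
      rw [← Finset.sum_filter_add_sum_filter_not Finset.univ (fun b => v b = 0)]
      have hz : ∑ b ∈ Finset.univ.filter fun b => v b = 0, |w b| = 0 := by
        apply Finset.sum_eq_zero
        intro b hb
        have hvb : v b = 0 := (Finset.mem_filter.mp hb).2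
        simp [hwdef, hvb]
      rw [hz, zero_add, hPdef]
      apply Finset.sum_congr rfl
      intro b hb
      have hvb : ¬ v b = 0 := (Finset.mem_filter.mp hb).2
      simp [hwdef, hvb, abs_of_nonneg (ht0 b)]
    rw [e1, e2] at h
    have hsq : Real.sqrt (1 / (8 * (n:ℝ)) * X) ≤ Real.sqrt ((1 / (n:ℝ)) * X) := by
      apply Real.sqrt_le_sqrt
      apply mul_le_mul_of_nonneg_right _ hX0
      rw [div_le_div_iff₀ (by positivity) (by positivity)]
      nlinarith
    linarith [h, hP0]
end

section
/- The combinatorial best-subset problem min over S ⊆ [k] of { π_t(S)² + (1/n) Σ_{a∉S} π_b(a) ρ(a)² } is lower bounded, up to a universal constant factor, by π_t(S*)² + (1/n) Σ_{a∉S*} π_b(a) ρ(a)², where S* is the support of a minimizer of the convex program min_v sqrt((1/(8n)) Σ_a (π_t(a)−v(a))²/π_b(a)) + (1/2) Σ_a |v(a)|. -/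
open scoped Classical

set_option maxHeartbeats 2000000 in
/-- Proposition (optimal subset): the combinatorial best-subset objective is lower
bounded, up to a universal constant, by its value at S*, the support of a minimizer
of the convex program. -/
theorem best_subset_lower_bound :
    ∃ c : ℝ, 0 < c ∧
      ∀ (k n : ℕ), 0 < n →
      ∀ (πb πt : Fin k → ℝ),
        (∀ a, 0 ≤ πb a) → (∑ a, πb a = 1) →
        (∀ a, 0 ≤ πt a) → (∑ a, πt a = 1) →
      ∀ vstar : Fin k → ℝ,
        (∀ v : Fin k → ℝ,
          Real.sqrt ((1 / (8 * (n : ℝ))) * ∑ a, (πt a - vstar a) ^ 2 / πb a)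
              + (1 / 2) * ∑ a, |vstar a|
            ≤ Real.sqrt ((1 / (8 * (n : ℝ))) * ∑ a, (πt a - v a) ^ 2 / πb a)
              + (1 / 2) * ∑ a, |v a|) →
      ∀ S : Finset (Fin k),
        c * ((∑ a ∈ Finset.univ.filter fun a => vstar a ≠ 0, πt a) ^ 2
              + (1 / (n : ℝ)) *
                  ∑ a ∈ Finset.univ.filter fun a => vstar a = 0,
                    πb a * (πt a / πb a) ^ 2)
          ≤ (∑ a ∈ S, πt a) ^ 2
              + (1 / (n : ℝ)) * ∑ a ∈ Sᶜ, πb a * (πt a / πb a) ^ 2 := by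
  refine ⟨1/44, by norm_num, ?_⟩
  intro k n hn πb πt hb hbsum ht htsum vstar hmin S
  have hn0 : (0:ℝ) < (n:ℝ) := by exact_mod_cast hn
  set S0 := ∑ a, (πt a - vstar a) ^ 2 / πb a with hS0
  set L := ∑ a, |vstar a| with hLdef
  set Q := 1 / (8 * (n:ℝ)) * S0 with hQdef
  set q := Real.sqrt Q with hqdef
  clear_value q
  clear_value Q
  clear_value L
  clear_value S0
  have htermnn : ∀ a : Fin k, 0 ≤ (πt a - vstar a) ^ 2 / πb a :=
    fun a => div_nonneg (sq_nonneg _) (hb a)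
  have hS0nn : 0 ≤ S0 := by
    rw [hS0]; exact Finset.sum_nonneg fun a _ => htermnn a
  have hQnn : 0 ≤ Q := by
    rw [hQdef]; exact mul_nonneg (by positivity) hS0nn
  have hqnn : 0 ≤ q := by rw [hqdef]; exact Real.sqrt_nonneg _
  have hq2 : q ^ 2 = Q := by rw [hqdef]; exact Real.sq_sqrt hQnn
  have hLnn : 0 ≤ L := by
    rw [hLdef]; exact Finset.sum_nonneg fun a _ => abs_nonneg _
  have hsingle : ∀ a : Fin k, (πt a - vstar a) ^ 2 / πb a ≤ S0 := by
    intro a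
    rw [hS0]
    exact Finset.single_le_sum (fun i _ => htermnn i) (Finset.mem_univ a)
  have habs : ∀ a : Fin k, πb a * (πt a / πb a) ^ 2 = (πt a) ^ 2 / πb a := by
    intro a
    by_cases h : πb a = 0
    · simp [h]
    · field_simp
  -- update sum lemmas
  have hupdQ : ∀ (a : Fin k) (t : ℝ),
      (∑ x, (πt x - Function.update vstar a t x) ^ 2 / πb x)
        = S0 - (πt a - vstar a) ^ 2 / πb a + (πt a - t) ^ 2 / πb a := by
    intro a t
    have e1 : ∀ w : Fin k → ℝ, (∑ x, (πt x - w x) ^ 2 / πb x)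
        = (πt a - w a) ^ 2 / πb a + ∑ x ∈ Finset.univ.erase a, (πt x - w x) ^ 2 / πb x :=
      fun w => (Finset.add_sum_erase _ _ (Finset.mem_univ a)).symm
    have e2 : ∑ x ∈ Finset.univ.erase a, (πt x - Function.update vstar a t x) ^ 2 / πb x
        = ∑ x ∈ Finset.univ.erase a, (πt x - vstar x) ^ 2 / πb x :=
      Finset.sum_congr rfl fun x hx => by
        rw [Function.update_of_ne (Finset.ne_of_mem_erase hx)]
    rw [e1, Function.update_self, e2, hS0, e1 vstar]
    ring
  have hupdL : ∀ (a : Fin k) (t : ℝ),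
      (∑ x, |Function.update vstar a t x|) = L - |vstar a| + |t| := by
    intro a t
    have e1 : ∀ w : Fin k → ℝ, (∑ x, |w x|)
        = |w a| + ∑ x ∈ Finset.univ.erase a, |w x| :=
      fun w => (Finset.add_sum_erase _ _ (Finset.mem_univ a)).symm
    have e2 : ∑ x ∈ Finset.univ.erase a, |Function.update vstar a t x|
        = ∑ x ∈ Finset.univ.erase a, |vstar x| :=
      Finset.sum_congr rfl fun x hx => by
        rw [Function.update_of_ne (Finset.ne_of_mem_erase hx)]
    rw [e1, Function.update_self, e2, hLdef, e1 vstar]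
    ring
  have hmin2 : ∀ (a : Fin k) (t : ℝ),
      q + 1 / 2 * L ≤
        Real.sqrt (1 / (8 * (n:ℝ)) *
            (S0 - (πt a - vstar a) ^ 2 / πb a + (πt a - t) ^ 2 / πb a))
          + 1 / 2 * (L - |vstar a| + |t|) := by
    intro a t
    have h := hmin (Function.update vstar a t)
    rwa [hupdQ a t, hupdL a t] at h
  have hdivle : ∀ x y c : ℝ, 0 ≤ c → x ≤ y → x / c ≤ y / c := by
    intro x y c hc hxy
    rcases hc.eq_or_lt with h | h
    · rw [← h]; simp
    · exact (div_le_div_iff_of_pos_right h).mpr hxy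
  have hsqrt_le : ∀ x : ℝ, x ≤ S0 → Real.sqrt (1 / (8 * (n:ℝ)) * x) ≤ q := by
    intro x hx
    rw [hqdef, hQdef]
    exact Real.sqrt_le_sqrt (mul_le_mul_of_nonneg_left hx (by positivity))
  -- v* is between 0 and πt
  have hv0 : ∀ a, 0 ≤ vstar a := by
    intro a
    by_contra hneg
    push_neg at hneg
    have h := hmin2 a 0
    have harg : S0 - (πt a - vstar a) ^ 2 / πb a + (πt a - 0) ^ 2 / πb a ≤ S0 := by
      have h1 : (πt a - 0) ^ 2 ≤ (πt a - vstar a) ^ 2 := by nlinarith [ht a]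
      have h2 := hdivle _ _ _ (hb a) h1
      linarith
    have h2 := hsqrt_le _ harg
    rw [abs_zero] at h
    have h3 : |vstar a| ≤ 0 := by linarith
    have h4 : vstar a = 0 := abs_nonpos_iff.mp h3
    linarith
  have hvle : ∀ a, vstar a ≤ πt a := by
    intro a
    have h := hmin2 a (πt a)
    have harg : S0 - (πt a - vstar a) ^ 2 / πb a + (πt a - πt a) ^ 2 / πb a ≤ S0 := by
      have := htermnn a
      simp only [sub_self]
      norm_num
      linarith
    have h2 := hsqrt_le _ harg
    rw [abs_of_nonneg (hv0 a), abs_of_nonneg (ht a)] at h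
    linarith
  have hb0v : ∀ a, πb a = 0 → vstar a = 0 := by
    intro a h0
    have h := hmin2 a 0
    rw [h0] at h
    simp only [div_zero, abs_zero, sub_zero, add_zero] at h
    rw [← hQdef, ← hqdef] at h
    have h3 : |vstar a| ≤ 0 := by linarith
    exact abs_nonpos_iff.mp h3
  -- upper bound: πt a - vstar a ≤ 8 n q πb a  when πb a > 0
  have hupper : ∀ a, 0 < πb a → πt a - vstar a ≤ 8 * (n:ℝ) * q * πb a := by
    intro a hba
    rcases (sub_nonneg.mpr (hvle a)).eq_or_lt with hd | hd
    · rw [← hd]; positivity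
    · have h := hmin2 a (πt a)
      set Qv := 1 / (8 * (n:ℝ)) *
          (S0 - (πt a - vstar a) ^ 2 / πb a + (πt a - πt a) ^ 2 / πb a) with hQvdef
      clear_value Qv
      have hQv' : Qv = 1 / (8 * (n:ℝ)) * (S0 - (πt a - vstar a) ^ 2 / πb a) := by
        rw [hQvdef]; simp
      have hQvnn : 0 ≤ Qv := by
        rw [hQv']
        exact mul_nonneg (by positivity) (by linarith [hsingle a])
      have hQvle : Qv ≤ Q := by
        rw [hQv', hQdef]
        exact mul_le_mul_of_nonneg_left (by linarith [htermnn a]) (by positivity)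
      have hsle : Real.sqrt Qv ≤ q := by
        rw [hqdef]; exact Real.sqrt_le_sqrt hQvle
      have hsq : Real.sqrt Qv ^ 2 = Qv := Real.sq_sqrt hQvnn
      rw [abs_of_nonneg (hv0 a), abs_of_nonneg (ht a)] at h
      have h1 : q - Real.sqrt Qv ≤ (πt a - vstar a) / 2 := by linarith
      have h3 : (πt a - vstar a) ^ 2 / πb a
          = 8 * (n:ℝ) * (q ^ 2 - Real.sqrt Qv ^ 2) := by
        rw [hq2, hsq, hQdef, hQv']
        field_simp
        ring
      have hqs : 0 ≤ q + Real.sqrt Qv := add_nonneg hqnn (Real.sqrt_nonneg _)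
      have hmul := mul_le_mul_of_nonneg_right h1 hqs
      have h4 : (πt a - vstar a) ^ 2 / πb a ≤ 8 * (n:ℝ) * ((πt a - vstar a) * q) := by
        rw [h3]
        have hcore : q ^ 2 - Real.sqrt Qv ^ 2 ≤ (πt a - vstar a) * q := by
          nlinarith [hmul, hsle, hd.le, hqnn, Real.sqrt_nonneg Qv]
        exact mul_le_mul_of_nonneg_left hcore (by positivity)
      have h5 : (πt a - vstar a) ^ 2 ≤ 8 * (n:ℝ) * ((πt a - vstar a) * q) * πb a :=
        (div_le_iff₀ hba).mp h4
      nlinarith [h5, hd]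
  -- lower bound: 4 n πb a q ≤ πt a - vstar a  when vstar a > 0
  have hlower : ∀ a, 0 < vstar a → 4 * (n:ℝ) * πb a * q ≤ πt a - vstar a := by
    intro a hva
    have hbne : πb a ≠ 0 := by
      intro h0
      rw [hb0v a h0] at hva
      exact lt_irrefl _ hva
    have hba : 0 < πb a := (hb a).lt_of_ne (Ne.symm hbne)
    have key : ∀ ε : ℝ, 0 < ε → ε ≤ vstar a →
        8 * (n:ℝ) * πb a * q ≤ 2 * (πt a - vstar a) + ε := by
      intro ε hε hεle
      have h := hmin2 a (vstar a - ε)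
      rw [abs_of_nonneg (hv0 a), abs_of_nonneg (by linarith : (0:ℝ) ≤ vstar a - ε)] at h
      set Qv := 1 / (8 * (n:ℝ)) *
          (S0 - (πt a - vstar a) ^ 2 / πb a + (πt a - (vstar a - ε)) ^ 2 / πb a) with hQvdef
      clear_value Qv
      have hQvnn : 0 ≤ Qv := by
        rw [hQvdef]
        refine mul_nonneg (by positivity) ?_
        have h2 : (0:ℝ) ≤ (πt a - (vstar a - ε)) ^ 2 / πb a :=
          div_nonneg (sq_nonneg _) (hb a)
        linarith [hsingle a]
      have h1 : q + ε / 2 ≤ Real.sqrt Qv := by linarith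
      have h1sq : (q + ε / 2) ^ 2 ≤ Qv := by
        have h0' : 0 ≤ q + ε / 2 := by linarith
        have := pow_le_pow_left₀ h0' h1 2
        rwa [Real.sq_sqrt hQvnn] at this
      have hQvQ : Qv = Q + ε * (2 * (πt a - vstar a) + ε) / (8 * (n:ℝ) * πb a) := by
        rw [hQvdef, hQdef]
        field_simp
        ring
      rw [hQvQ] at h1sq
      have h7 : q * ε + ε ^ 2 / 4
          ≤ ε * (2 * (πt a - vstar a) + ε) / (8 * (n:ℝ) * πb a) := by
        nlinarith [h1sq, hq2]
      have h6 : (q * ε + ε ^ 2 / 4) * (8 * (n:ℝ) * πb a)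
          ≤ ε * (2 * (πt a - vstar a) + ε) :=
        (le_div_iff₀ (by positivity)).mp h7
      nlinarith [h6, hε, mul_nonneg (mul_nonneg hn0.le hba.le) (sq_nonneg ε)]
    have h8 : 8 * (n:ℝ) * πb a * q ≤ 2 * (πt a - vstar a) := by
      apply le_of_forall_pos_le_add
      intro ε hε
      rcases le_or_gt ε (vstar a) with hle | hgt
      · exact key ε hε hle
      · linarith [key (vstar a) hva le_rfl]
    linarith
  -- support mass bound
  have hS0q : S0 = 8 * (n:ℝ) * q ^ 2 := by
    rw [hq2, hQdef]
    field_simp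
  have hbfilt : ∀ a ∈ Finset.univ.filter (fun a => vstar a ≠ 0), 0 < πb a := by
    intro a ha
    have hane : vstar a ≠ 0 := (Finset.mem_filter.mp ha).2
    have hbne : πb a ≠ 0 := fun h0 => hane (hb0v a h0)
    exact (hb a).lt_of_ne (Ne.symm hbne)
  have hvfilt : ∀ a ∈ Finset.univ.filter (fun a => vstar a ≠ 0), 0 < vstar a := by
    intro a ha
    have hane : vstar a ≠ 0 := (Finset.mem_filter.mp ha).2
    exact (hv0 a).lt_of_ne (Ne.symm hane)
  set P := ∑ a ∈ Finset.univ.filter (fun a => vstar a ≠ 0), πb a with hPdef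
  clear_value P
  have hsum1 : (∑ a ∈ Finset.univ.filter (fun a => vstar a ≠ 0),
      (4 * (n:ℝ) * πb a * q) ^ 2 / πb a) ≤ S0 := by
    have step1 : (∑ a ∈ Finset.univ.filter (fun a => vstar a ≠ 0),
        (4 * (n:ℝ) * πb a * q) ^ 2 / πb a)
        ≤ ∑ a ∈ Finset.univ.filter (fun a => vstar a ≠ 0),
            (πt a - vstar a) ^ 2 / πb a := by
      refine Finset.sum_le_sum fun a ha => ?_
      refine hdivle _ _ _ (hb a) ?_
      have h1 := hlower a (hvfilt a ha)
      have h2 : 0 ≤ 4 * (n:ℝ) * πb a * q := by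
        have := (hbfilt a ha).le
        positivity
      exact pow_le_pow_left₀ h2 h1 2
    refine step1.trans ?_
    rw [hS0]
    exact Finset.sum_le_sum_of_subset_of_nonneg (Finset.filter_subset _ _)
      (fun i _ _ => htermnn i)
  have hsum2 : (∑ a ∈ Finset.univ.filter (fun a => vstar a ≠ 0),
      (4 * (n:ℝ) * πb a * q) ^ 2 / πb a) = 16 * (n:ℝ) ^ 2 * q ^ 2 * P := by
    rw [hPdef, Finset.mul_sum]
    refine Finset.sum_congr rfl fun a ha => ?_
    have hba : πb a ≠ 0 := (hbfilt a ha).ne'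
    field_simp
    ring
  have h2nq : 16 * (n:ℝ) ^ 2 * q ^ 2 * P ≤ 8 * (n:ℝ) * q ^ 2 := by
    rw [← hsum2, ← hS0q]; exact hsum1
  have hPq : 8 * (n:ℝ) * q * P ≤ 4 * q := by
    rcases hqnn.eq_or_lt with h0 | h0
    · rw [← h0]; simp
    · have hnq : 0 < (n:ℝ) * q := mul_pos hn0 h0
      nlinarith [h2nq, hnq]
  -- πt mass on support
  have hA : (∑ a ∈ Finset.univ.filter (fun a => vstar a ≠ 0), πt a) ≤ L + 4 * q := by
    have h1 : (∑ a ∈ Finset.univ.filter (fun a => vstar a ≠ 0), πt a)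
        ≤ ∑ a ∈ Finset.univ.filter (fun a => vstar a ≠ 0),
            (vstar a + 8 * (n:ℝ) * q * πb a) := by
      refine Finset.sum_le_sum fun a ha => ?_
      linarith [hupper a (hbfilt a ha)]
    have h2 : (∑ a ∈ Finset.univ.filter (fun a => vstar a ≠ 0),
        (vstar a + 8 * (n:ℝ) * q * πb a))
        = (∑ a ∈ Finset.univ.filter (fun a => vstar a ≠ 0), vstar a)
          + 8 * (n:ℝ) * q * P := by
      rw [Finset.sum_add_distrib, hPdef, Finset.mul_sum]
    have h3 : (∑ a ∈ Finset.univ.filter (fun a => vstar a ≠ 0), vstar a) ≤ L := by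
      rw [hLdef]
      calc (∑ a ∈ Finset.univ.filter (fun a => vstar a ≠ 0), vstar a)
          ≤ ∑ a ∈ Finset.univ.filter (fun a => vstar a ≠ 0), |vstar a| :=
            Finset.sum_le_sum fun a _ => le_abs_self _
        _ ≤ ∑ a, |vstar a| :=
            Finset.sum_le_sum_of_subset_of_nonneg (Finset.filter_subset _ _)
              (fun i _ _ => abs_nonneg _)
    linarith [hPq, h1, h2 ▸ h1]
  -- off-support sum bound
  have hR : (∑ a ∈ Finset.univ.filter (fun a => vstar a = 0),
      πb a * (πt a / πb a) ^ 2) ≤ 8 * (n:ℝ) * q ^ 2 := by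
    have h1 : (∑ a ∈ Finset.univ.filter (fun a => vstar a = 0),
        πb a * (πt a / πb a) ^ 2)
        = ∑ a ∈ Finset.univ.filter (fun a => vstar a = 0),
            (πt a - vstar a) ^ 2 / πb a := by
      refine Finset.sum_congr rfl fun a ha => ?_
      have h0 : vstar a = 0 := (Finset.mem_filter.mp ha).2
      rw [habs a, h0, sub_zero]
    rw [h1, ← hS0q, hS0]
    exact Finset.sum_le_sum_of_subset_of_nonneg (Finset.filter_subset _ _)
      (fun i _ _ => htermnn i)
  -- lower bound on the objective at any S
  set A := ∑ a ∈ S, πt a with hAdef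
  clear_value A
  set T := ∑ a ∈ Sᶜ, πb a * (πt a / πb a) ^ 2 with hTdef
  clear_value T
  have hAnn : 0 ≤ A := by
    rw [hAdef]; exact Finset.sum_nonneg fun a _ => ht a
  have hTnn : 0 ≤ T := by
    rw [hTdef]
    exact Finset.sum_nonneg fun a _ => mul_nonneg (hb a) (sq_nonneg _)
  have h9 : q + 1 / 2 * L ≤ Real.sqrt (1 / (8 * (n:ℝ)) * T) + 1 / 2 * A := by
    have h := hmin (fun a => if a ∈ S then πt a else 0)
    have e1 : (∑ a, (πt a - if a ∈ S then πt a else 0) ^ 2 / πb a) = T := by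
      have hterm : ∀ a : Fin k, (πt a - if a ∈ S then πt a else 0) ^ 2 / πb a
          = if a ∈ Sᶜ then πb a * (πt a / πb a) ^ 2 else 0 := by
        intro a
        by_cases hS' : a ∈ S
        · simp [hS', Finset.mem_compl]
        · simp [hS', Finset.mem_compl, habs a]
      rw [Finset.sum_congr rfl fun a _ => hterm a, Finset.sum_ite_mem,
        Finset.univ_inter, hTdef]
    have e2 : (∑ a, |if a ∈ S then πt a else 0|) = A := by
      have hterm : ∀ a : Fin k, |if a ∈ S then πt a else 0|
          = if a ∈ S then πt a else 0 := by
        intro a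
        by_cases hS' : a ∈ S
        · simp [hS', abs_of_nonneg (ht a)]
        · simp [hS']
      rw [Finset.sum_congr rfl fun a _ => hterm a, Finset.sum_ite_mem,
        Finset.univ_inter, hAdef]
    rwa [e1, e2] at h
  have hsqT : Real.sqrt (1 / (8 * (n:ℝ)) * T) ^ 2 = 1 / (8 * (n:ℝ)) * T :=
    Real.sq_sqrt (by positivity)
  have hXle2 : 2 * Real.sqrt (1 / (8 * (n:ℝ)) * T) ^ 2 ≤ 1 / (n:ℝ) * T := by
    rw [hsqT]
    have hfrac : 2 * (1 / (8 * (n:ℝ))) ≤ 1 / (n:ℝ) := by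
      rw [mul_one_div, div_le_div_iff₀ (by positivity) hn0]
      nlinarith [hn0]
    nlinarith [hTnn, hfrac]
  have hG2 : (q + 1 / 2 * L) ^ 2 ≤ A ^ 2 + 1 / (n:ℝ) * T := by
    have h0 : 0 ≤ q + 1 / 2 * L := by linarith
    have h1 : (q + 1 / 2 * L) ^ 2 ≤ (Real.sqrt (1 / (8 * (n:ℝ)) * T) + 1 / 2 * A) ^ 2 :=
      pow_le_pow_left₀ h0 h9 2
    nlinarith [h1, hXle2, sq_nonneg (Real.sqrt (1 / (8 * (n:ℝ)) * T) - 1 / 2 * A),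
      sq_nonneg A]
  -- assemble
  have hAstnn : 0 ≤ (∑ a ∈ Finset.univ.filter (fun a => vstar a ≠ 0), πt a) :=
    Finset.sum_nonneg fun a _ => ht a
  have h10 : (∑ a ∈ Finset.univ.filter (fun a => vstar a ≠ 0), πt a) ^ 2
      ≤ (L + 4 * q) ^ 2 := pow_le_pow_left₀ hAstnn hA 2
  have hRn : 1 / (n:ℝ) * (∑ a ∈ Finset.univ.filter (fun a => vstar a = 0),
      πb a * (πt a / πb a) ^ 2) ≤ 8 * q ^ 2 := by
    have h1 := mul_le_mul_of_nonneg_left hR (by positivity : (0:ℝ) ≤ 1 / (n:ℝ))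
    have h2 : 1 / (n:ℝ) * (8 * (n:ℝ) * q ^ 2) = 8 * q ^ 2 := by
      field_simp
    linarith [h2 ▸ h1]
  nlinarith [h10, hRn, hG2, hqnn, hLnn, mul_nonneg hqnn hLnn]
end

section
/- Best uniform approximation of 1/x: for any 0 < ℓ < r and positive integer L, letting δ = ℓ/r, the best uniform approximation error of the function x ↦ 1/x on [ℓ, r] by polynomials of degree at most L equals (1/2)·((1+√δ)²/ℓ)·(1 − 2√δ/(1+√δ))^{L+1}. -/
/-!
Chebyshev's alternation argument: if the error `q - f` of a polynomial `q` of degree `≤ L`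
takes the values `±E` with alternating signs at `L + 2` points, no polynomial `p` of degree
`≤ L` does better, since `q - p` would change sign `L + 1` times.

Write `ℓ = κ (1 - σ)²`, `r = κ (1 + σ)²` and parametrise `[ℓ, r]` by `x = κ |w|²`,
`w = 1 + σ e^{iθ}`, `θ ∈ [0, π]`. With `n = L + 1`, `Re (e^{inθ} w̄²)` is a polynomial of degree
`n` in `cos θ`, hence in `x`; rescaled to take the value `1` at `x = 0` it is `1 - x q(x)` with
`deg q ≤ L`. Then `q(x) - 1/x = E cos (nθ - 2 arg w)`, whose phase runs continuously from `0` to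
`nπ`, so the error equioscillates at `n + 1` points.
-/

open Polynomial Real Set
open Complex (I arg exp_ofReal_mul_I_re)
open scoped Complex

theorem Polynomial.le_natDegree_of_eval_mul_neg {p : ℝ[X]} {x : ℕ → ℝ} {N : ℕ}
    (hx : StrictAntiOn x (Iic N)) (hp : ∀ j < N, p.eval (x j) * p.eval (x (j + 1)) < 0) :
    N ≤ p.natDegree := by
  rcases N.eq_zero_or_pos with rfl | hN
  · exact Nat.zero_le _
  have hp0 : p ≠ 0 := by rintro rfl; simpa using hp 0 hN
  have hroot : ∀ j < N, ∃ y ∈ Ioo (x (j + 1)) (x j), p.IsRoot y := by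
    intro j hj
    have hlt : x (j + 1) < x j := hx (mem_Iic.2 hj.le) (mem_Iic.2 hj) j.lt_succ_self
    rcases mul_neg_iff.1 (hp j hj) with ⟨hpos, hneg⟩ | ⟨hneg, hpos⟩
    · exact intermediate_value_Ioo hlt.le p.continuous.continuousOn ⟨hneg, hpos⟩
    · exact intermediate_value_Ioo' hlt.le p.continuous.continuousOn ⟨hneg, hpos⟩
  choose! y hy hyroot using hroot
  have hy_anti : StrictAntiOn y (Iio N) := fun i hi j hj hij =>
    calc y j < x j := (hy j hj).2
      _ ≤ x (i + 1) := hx.antitoneOn (mem_Iic.2 (Nat.succ_le_of_lt (hij.trans hj)))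
          (mem_Iic.2 hj.le) hij
      _ < y i := (hy i hi).1
  have hsub : ((Finset.range N).image y).val ⊆ p.roots := by
    intro z hz
    obtain ⟨j, hj, rfl⟩ := Finset.mem_image.1 (Finset.mem_def.2 hz)
    exact (mem_roots hp0).2 (hyroot j (Finset.mem_range.1 hj))
  have hinj : InjOn y (Finset.range N) := by simpa using hy_anti.injOn
  simpa [Finset.card_image_of_injOn hinj] using card_le_degree_of_subset_roots hsub

theorem exists_le_abs_eval_sub_of_alternation {f : ℝ → ℝ} {q p : ℝ[X]} {L : ℕ} {x : ℕ → ℝ}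
    {e : ℝ} (hx : StrictAntiOn x (Iic (L + 1))) (hq : q.natDegree ≤ L)
    (halt : ∀ j ≤ L + 1, q.eval (x j) - f (x j) = (-1) ^ j * e) (hp : p.natDegree ≤ L) :
    ∃ j ≤ L + 1, |e| ≤ |p.eval (x j) - f (x j)| := by
  by_contra! hlt
  have hsign : ∀ j ≤ L + 1, 0 < (-1) ^ j * e * (q - p).eval (x j) := by
    intro j hj
    have hD : (q - p).eval (x j) = (-1) ^ j * e - (p.eval (x j) - f (x j)) := by
      rw [eval_sub, ← halt j hj]; ring
    have hd : |p.eval (x j) - f (x j)| < |(-1) ^ j * e| := by simpa [abs_mul] using hlt j hj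
    rw [hD]
    generalize (-1 : ℝ) ^ j * e = u at hd ⊢
    generalize p.eval (x j) - f (x j) = d at hd ⊢
    nlinarith [le_abs_self (u * d), abs_mul u d, sq_abs u, abs_nonneg d]
  have hchange : ∀ j < L + 1, (q - p).eval (x j) * (q - p).eval (x (j + 1)) < 0 := by
    intro j hj
    have h := mul_pos (hsign j hj.le) (hsign (j + 1) hj)
    have hsq : ((-1 : ℝ) ^ j) ^ 2 = 1 := by rw [← pow_mul, mul_comm, pow_mul]; simp
    have hprod : (-1) ^ j * e * (q - p).eval (x j) *
        ((-1) ^ (j + 1) * e * (q - p).eval (x (j + 1)))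
        = -(e ^ 2 * ((q - p).eval (x j) * (q - p).eval (x (j + 1)))) := by
      linear_combination (-(e ^ 2 * (q - p).eval (x j) * (q - p).eval (x (j + 1)))) * hsq
    rw [hprod, neg_pos] at h
    exact neg_of_mul_neg_right h (sq_nonneg e)
  have := le_natDegree_of_eval_mul_neg hx hchange
  have := natDegree_sub_le_of_le hq hp
  omega

theorem sInf_approxErrors_eq_of_alternation {f : ℝ → ℝ} {I : Set ℝ} (hI : IsCompact I)
    (hf : ContinuousOn f I) {q : ℝ[X]} {L : ℕ} {x : ℕ → ℝ} {e : ℝ}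
    (hq : q.natDegree ≤ L) (hqe : ∀ y ∈ I, |q.eval y - f y| ≤ |e|)
    (hxI : ∀ j ≤ L + 1, x j ∈ I) (hx : StrictAntiOn x (Iic (L + 1)))
    (halt : ∀ j ≤ L + 1, q.eval (x j) - f (x j) = (-1) ^ j * e) :
    sInf {e' : ℝ | ∃ p : ℝ[X], p.natDegree ≤ L ∧ e' = ⨆ y : I, |p.eval (y : ℝ) - f y|} = |e| := by
  have hbdd (p : ℝ[X]) : BddAbove (range fun y : I => |p.eval (y : ℝ) - f y|) := by
    have := hI.bddAbove_image (p.continuous.continuousOn.sub hf).abs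
    rwa [image_eq_range] at this
  have hlower (p : ℝ[X]) (hp : p.natDegree ≤ L) : |e| ≤ ⨆ y : I, |p.eval (y : ℝ) - f y| := by
    obtain ⟨j, hj, hle⟩ := exists_le_abs_eval_sub_of_alternation hx hq halt hp
    exact hle.trans (le_ciSup (hbdd p) ⟨x j, hxI j hj⟩)
  have : Nonempty I := ⟨⟨x 0, hxI 0 (Nat.zero_le _)⟩⟩
  have hq_sup : ⨆ y : I, |q.eval (y : ℝ) - f y| = |e| :=
    (ciSup_le fun y : I => hqe y y.2).antisymm (hlower q hq)
  refine IsLeast.csInf_eq ⟨⟨q, hq, hq_sup.symm⟩, ?_⟩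
  rintro _ ⟨p, hp, rfl⟩
  exact hlower p hp

theorem exists_strictMonoOn_eq_levels {f : ℝ → ℝ} {a b : ℝ} (hab : a ≤ b)
    (hf : ContinuousOn f (Icc a b)) {c : ℕ → ℝ} (hc : StrictMono c) {N : ℕ}
    (ha : f a ≤ c 0) (hb : c N ≤ f b) :
    ∃ t : ℕ → ℝ, StrictMonoOn t (Iic N) ∧ ∀ j ≤ N, t j ∈ Icc a b ∧ f (t j) = c j := by
  induction N with
  | zero =>
    obtain ⟨t₀, ht₀, hft₀⟩ := intermediate_value_Icc hab hf ⟨ha, hb⟩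
    refine ⟨fun _ => t₀, fun i hi j hj hij => ?_, fun j hj => ?_⟩
    · simp only [mem_Iic, nonpos_iff_eq_zero] at hi hj; omega
    · obtain rfl : j = 0 := by omega
      exact ⟨ht₀, hft₀⟩
  | succ N ih =>
    obtain ⟨t, ht, htf⟩ := ih ((hc.monotone N.le_succ).trans hb)
    obtain ⟨htN, hftN⟩ := htf N le_rfl
    obtain ⟨s, hs, hfs⟩ := intermediate_value_Icc htN.2 (hf.mono (Icc_subset_Icc htN.1 le_rfl))
      ⟨hftN ▸ (hc N.lt_succ_self).le, hb⟩
    have htN_lt : t N < s :=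
      lt_of_le_of_ne hs.1 fun h => (hc N.lt_succ_self).ne (hftN ▸ h ▸ hfs)
    refine ⟨fun j => if j ≤ N then t j else s, fun i hi j hj hij => ?_, fun j hj => ?_⟩
    · simp only [mem_Iic] at hi hj
      have hiN : i ≤ N := by omega
      by_cases hjN : j ≤ N
      · simpa [hiN, hjN] using ht hiN hjN hij
      · simpa [hiN, hjN] using (ht.monotoneOn hiN (mem_Iic.2 le_rfl) hiN).trans_lt htN_lt
    · by_cases hjN : j ≤ N
      · simpa [hjN] using htf j hjN
      · obtain rfl : j = N + 1 := by omega
        simpa using ⟨⟨htN.1.trans hs.1, hs.2⟩, hfs⟩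

theorem Polynomial.eval_divX_one_sub_sub_inv {K : Type*} [Field K] {H : K[X]} (hH : H.eval 0 = 1)
    {x : K} (hx : x ≠ 0) : (1 - H).divX.eval x - 1 / x = -H.eval x / x := by
  have h := congrArg (eval x) (divX_mul_X_add (1 - H))
  rw [coeff_zero_eq_eval_zero, eval_sub, eval_one, hH, sub_self, C_0, add_zero, eval_mul,
    eval_X, eval_sub, eval_one] at h
  field_simp
  linear_combination h

namespace Polynomial.Chebyshev

theorem T_eval_half_add_inv {K : Type*} [Field K] [NeZero (2 : K)] {ζ : K} (hζ : ζ ≠ 0)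
    (n : ℤ) : (T K n).eval ((ζ + ζ⁻¹) / 2) = (ζ ^ n + ζ⁻¹ ^ n) / 2 := by
  induction n using Polynomial.Chebyshev.induct' with
  | zero => simp
  | one => simp
  | add_two n ih1 ih2 =>
    rw [T_add_two, eval_sub, eval_mul, eval_mul, eval_X, ih1, ih2]
    simp only [eval_ofNat, zpow_add₀ hζ, zpow_add₀ (inv_ne_zero hζ), zpow_one, zpow_two]
    field_simp
    ring
  | neg n ih => rw [T_neg, ih, inv_zpow, inv_zpow, zpow_neg, inv_inv, add_comm]

end Polynomial.Chebyshev

noncomputable def twistedT (σ : ℝ) (n : ℤ) : ℝ[X] :=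
  Chebyshev.T ℝ n + C (2 * σ) * Chebyshev.T ℝ (n - 1) + C (σ ^ 2) * Chebyshev.T ℝ (n - 2)

theorem natDegree_twistedT_le (σ : ℝ) {n : ℕ} (hn : 0 < n) : (twistedT σ n).natDegree ≤ n := by
  unfold twistedT
  refine natDegree_add_le_of_degree_le (natDegree_add_le_of_degree_le ?_ ?_) ?_
  · rw [Chebyshev.natDegree_T]; simp
  · refine (natDegree_C_mul_le _ _).trans ?_
    rw [Chebyshev.natDegree_T]; omega
  · refine (natDegree_C_mul_le _ _).trans ?_
    rw [Chebyshev.natDegree_T]; omega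

theorem twistedT_eval_neg_half_add_inv {σ : ℝ} (hσ : σ ≠ 0) (n : ℤ) :
    (twistedT σ n).eval ((-σ + (-σ)⁻¹) / 2) = (-σ)⁻¹ ^ n * (1 - σ ^ 2) ^ 2 / 2 := by
  have hσ' : -σ ≠ 0 := neg_ne_zero.2 hσ
  simp only [twistedT, eval_add, eval_mul, eval_C, Chebyshev.T_eval_half_add_inv hσ',
    zpow_sub₀ hσ', zpow_sub₀ (inv_ne_zero hσ'), zpow_one, zpow_two]
  field_simp
  ring

noncomputable def twistAngle (n : ℤ) (σ θ : ℝ) : ℝ :=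
  n * θ - 2 * arg (1 + σ * cexp (θ * I))

theorem cos_add_two_mul_cos_add_sq_mul_cos (n : ℤ) (σ θ : ℝ) :
    cos (n * θ) + 2 * σ * cos ((n - 1) * θ) + σ ^ 2 * cos ((n - 2) * θ)
      = (1 + 2 * σ * cos θ + σ ^ 2) * cos (twistAngle n σ θ) := by
  set w : ℂ := 1 + σ * cexp (θ * I)
  have hconj : 1 + σ * cexp (-(θ * I)) = ‖w‖ * cexp (-(arg w * I)) := by
    have h := congrArg (starRingEnd ℂ) (Complex.norm_mul_exp_arg_mul_I w)
    simp only [map_mul, map_add, ← Complex.exp_conj, Complex.conj_ofReal, map_one,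
      Complex.conj_I, mul_neg, w] at h
    exact h.symm
  have hnorm : ‖w‖ ^ 2 = 1 + 2 * σ * cos θ + σ ^ 2 := by
    rw [Complex.sq_norm, Complex.normSq_apply]
    simp [w, exp_ofReal_mul_I_re, Complex.exp_ofReal_mul_I_im]
    nlinarith [sin_sq_add_cos_sq θ]
  have h := congrArg (fun u => (cexp (n * θ * I) * u ^ 2).re) hconj
  have e1 : cexp (((n - 1) * θ : ℝ) * I) = cexp (n * θ * I) * cexp (-(θ * I)) := by
    rw [← Complex.exp_add]; push_cast; ring_nf
  have e2 : cexp (((n - 2) * θ : ℝ) * I) = cexp (n * θ * I) * cexp (-(θ * I)) ^ 2 := by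
    rw [sq, ← mul_assoc, ← Complex.exp_add, ← Complex.exp_add]; push_cast; ring_nf
  have e3 : cexp (n * θ * I) * (‖w‖ * cexp (-(arg w * I))) ^ 2
      = ((‖w‖ ^ 2 : ℝ) : ℂ) * cexp ((twistAngle n σ θ : ℝ) * I) := by
    rw [twistAngle, ← show w = 1 + σ * cexp (θ * I) from rfl, mul_pow, sq (cexp _),
      mul_left_comm, ← Complex.exp_add, ← Complex.exp_add]
    push_cast; ring_nf
  have e4 : cexp (n * θ * I) * (1 + σ * cexp (-(θ * I))) ^ 2 = cexp ((n * θ : ℝ) * I)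
      + ((2 * σ : ℝ) : ℂ) * cexp (((n - 1) * θ : ℝ) * I)
      + ((σ ^ 2 : ℝ) : ℂ) * cexp (((n - 2) * θ : ℝ) * I) := by
    rw [e1, e2]; push_cast; ring
  simp only [e3, e4, Complex.add_re, Complex.re_ofReal_mul, exp_ofReal_mul_I_re, hnorm] at h
  exact h

theorem twistedT_eval_cos (σ θ : ℝ) (n : ℤ) :
    (twistedT σ n).eval (cos θ) = (1 + 2 * σ * cos θ + σ ^ 2) * cos (twistAngle n σ θ) := by
  simp only [twistedT, eval_add, eval_mul, eval_C, Chebyshev.T_real_cos]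
  push_cast
  exact cos_add_two_mul_cos_add_sq_mul_cos n σ θ

theorem continuous_twistAngle (n : ℤ) {σ : ℝ} (hσ : |σ| < 1) :
    Continuous (twistAngle n σ) := by
  have hre : ∀ θ : ℝ, 0 < (1 + σ * cexp (θ * I)).re := by
    intro θ
    simp only [Complex.add_re, Complex.one_re, Complex.re_ofReal_mul, exp_ofReal_mul_I_re]
    have : |σ * cos θ| < 1 := by
      rw [abs_mul]; exact (mul_le_of_le_one_right (abs_nonneg σ) (abs_cos_le_one θ)).trans_lt hσ
    linarith [neg_abs_le (σ * cos θ)]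
  refine (continuous_const.mul continuous_id).sub (continuous_const.mul ?_)
  refine continuous_iff_continuousAt.2 fun θ => ?_
  exact (Complex.continuousAt_arg (Complex.mem_slitPlane_iff.2 (Or.inl (hre θ)))).comp
    (f := fun θ : ℝ => 1 + σ * cexp (θ * I)) (by fun_prop)

theorem twistAngle_zero (n : ℤ) {σ : ℝ} (hσ : -1 ≤ σ) : twistAngle n σ 0 = 0 := by
  have : (1 + σ * cexp ((0 : ℝ) * I)) = ((1 + σ : ℝ) : ℂ) := by simp
  rw [twistAngle, this, Complex.arg_ofReal_of_nonneg (by linarith)]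
  simp

theorem twistAngle_pi (n : ℤ) {σ : ℝ} (hσ : σ ≤ 1) : twistAngle n σ π = n * π := by
  have : (1 + σ * cexp (π * I)) = ((1 - σ : ℝ) : ℂ) := by
    rw [Complex.exp_pi_mul_I]; push_cast; ring
  rw [twistAngle, this, Complex.arg_ofReal_of_nonneg (by linarith)]
  simp

theorem exists_eval_sub_inv_eq_mul_cos_twistAngle {κ σ : ℝ} (hκ : 0 < κ) (hσ0 : 0 < σ)
    (hσ1 : σ < 1) (L : ℕ) :
    ∃ q : ℝ[X], q.natDegree ≤ L ∧ ∀ θ : ℝ,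
      q.eval (κ * (1 + 2 * σ * cos θ + σ ^ 2)) - 1 / (κ * (1 + 2 * σ * cos θ + σ ^ 2))
        = -(2 * (-σ) ^ (L + 1) / (κ * (1 - σ ^ 2) ^ 2)) * cos (twistAngle (L + 1) σ θ) := by
  have hσ : σ ≠ 0 := hσ0.ne'
  have hσ2 : 1 - σ ^ 2 ≠ 0 := by nlinarith
  set y₀ : ℝ := (-σ + (-σ)⁻¹) / 2
  set P := twistedT σ (L + 1 : ℕ)
  have hPy₀ : P.eval y₀ = (1 - σ ^ 2) ^ 2 / (2 * (-σ) ^ (L + 1)) := by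
    rw [twistedT_eval_neg_half_add_inv hσ, zpow_natCast, inv_pow]
    field_simp
  set H : ℝ[X] := C (P.eval y₀)⁻¹ * P.comp (C (1 / (2 * σ * κ)) * X + C y₀)
  have hH0 : H.eval 0 = 1 := by
    simp only [H, eval_mul, eval_C, eval_comp, eval_add, eval_X, mul_zero, zero_add]
    rw [hPy₀]
    exact inv_mul_cancel₀ (div_ne_zero (pow_ne_zero 2 hσ2)
      (mul_ne_zero two_ne_zero (pow_ne_zero _ (neg_ne_zero.2 hσ))))
  refine ⟨(1 - H).divX, ?_, fun θ => ?_⟩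
  · have hH : H.natDegree ≤ L + 1 := by
      refine (natDegree_C_mul_le _ _).trans (natDegree_comp_le.trans ?_)
      have hlin : (C (1 / (2 * σ * κ)) * X + C y₀).natDegree ≤ 1 := by compute_degree
      exact (Nat.mul_le_mul (natDegree_twistedT_le σ L.succ_pos) hlin).trans (mul_one _).le
    rw [natDegree_divX_eq_natDegree_tsub_one]
    have := natDegree_sub_le_of_le (natDegree_one.le.trans (Nat.zero_le (L + 1))) hH
    omega
  set x := κ * (1 + 2 * σ * cos θ + σ ^ 2)
  have hA : 0 < 1 + 2 * σ * cos θ + σ ^ 2 := by nlinarith [neg_one_le_cos θ]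
  have hlin : (C (1 / (2 * σ * κ)) * X + C y₀).eval x = cos θ := by
    simp only [eval_add, eval_mul, eval_C, eval_X, x, y₀]
    field_simp
    ring
  have hHx : H.eval x = (P.eval y₀)⁻¹ * ((1 + 2 * σ * cos θ + σ ^ 2) *
      cos (twistAngle (L + 1) σ θ)) := by
    simp only [H, eval_mul, eval_C, eval_comp, hlin, P, twistedT_eval_cos]
    push_cast
    ring_nf
  have hx : x ≠ 0 := (mul_pos hκ hA).ne'
  rw [eval_divX_one_sub_sub_inv hH0 hx, hHx, hPy₀]
  field_simp
  ring

theorem range_mul_one_add_two_mul_cos_add_sq {κ σ : ℝ} (hκ : 0 < κ) (hσ : 0 < σ) :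
    range (fun θ => κ * (1 + 2 * σ * cos θ + σ ^ 2)) = Icc (κ * (1 - σ) ^ 2) (κ * (1 + σ) ^ 2) := by
  ext y
  constructor
  · rintro ⟨θ, rfl⟩
    have := neg_one_le_cos θ
    have := cos_le_one θ
    constructor <;> nlinarith [mul_pos hκ hσ]
  · rintro ⟨hy₁, hy₂⟩
    refine ⟨arccos ((y / κ - 1 - σ ^ 2) / (2 * σ)), ?_⟩
    dsimp only
    rw [cos_arccos]
    · field_simp; ring
    · rw [le_div_iff₀ (by positivity), le_sub_iff_add_le, le_sub_iff_add_le, le_div_iff₀ hκ]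
      nlinarith
    · rw [div_le_iff₀ (by positivity), sub_le_iff_le_add, sub_le_iff_le_add, div_le_iff₀ hκ]
      nlinarith

theorem sInf_approxErrors_inv {κ σ : ℝ} (hκ : 0 < κ) (hσ0 : 0 < σ) (hσ1 : σ < 1) (L : ℕ) :
    sInf {e : ℝ | ∃ p : ℝ[X], p.natDegree ≤ L ∧
        e = ⨆ x : Icc (κ * (1 - σ) ^ 2) (κ * (1 + σ) ^ 2), |p.eval (x : ℝ) - 1 / (x : ℝ)|}
      = 2 * σ ^ (L + 1) / (κ * (1 - σ ^ 2) ^ 2) := by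
  obtain ⟨q, hq, herr⟩ := exists_eval_sub_inv_eq_mul_cos_twistAngle hκ hσ0 hσ1 L
  set E := -(2 * (-σ) ^ (L + 1) / (κ * (1 - σ ^ 2) ^ 2))
  have hσ2 : 0 < 1 - σ ^ 2 := by nlinarith
  have hE : |E| = 2 * σ ^ (L + 1) / (κ * (1 - σ ^ 2) ^ 2) := by
    rw [abs_neg, abs_div, abs_mul, abs_pow, abs_neg, abs_of_pos hσ0, abs_two,
      abs_of_pos (by positivity)]
  have hrange := range_mul_one_add_two_mul_cos_add_sq hκ hσ0
  obtain ⟨θ, hθ_mono, hθ⟩ := exists_strictMonoOn_eq_levels (f := twistAngle (L + 1) σ)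
    (c := fun j : ℕ => j * π) (N := L + 1) pi_pos.le
    (continuous_twistAngle _ (abs_lt.2 ⟨by linarith, hσ1⟩)).continuousOn
    (fun i j hij => mul_lt_mul_of_pos_right (Nat.cast_lt.2 hij) pi_pos)
    (by simp [twistAngle_zero _ (by linarith : -1 ≤ σ)])
    (by rw [twistAngle_pi _ hσ1.le]; push_cast; rfl)
  rw [← hE]
  refine sInf_approxErrors_eq_of_alternation isCompact_Icc ?_ hq ?_
    (fun j _ => hrange ▸ mem_range_self (θ j)) ?_ ?_
  · exact continuousOn_const.div continuousOn_id fun y hy =>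
      (lt_of_lt_of_le (by positivity) hy.1).ne'
  · intro y hy
    obtain ⟨t, rfl⟩ := hrange ▸ hy
    rw [herr, abs_mul]
    exact mul_le_of_le_one_right (abs_nonneg E) (abs_cos_le_one _)
  · intro i hi j hj hij
    have := strictAntiOn_cos (hθ i hi).1 (hθ j hj).1 (hθ_mono hi hj hij)
    nlinarith [mul_pos hκ hσ0]
  · intro j hj
    rw [herr, (hθ j hj).2, cos_nat_mul_pi, mul_comm]

theorem best_approx_inv_general
    (ℓ r : ℝ) (hℓ : 0 < ℓ) (hℓr : ℓ < r) (L : ℕ) :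
    2 * sInf {e : ℝ | ∃ p : Polynomial ℝ, p.natDegree ≤ L ∧
        e = ⨆ x : Set.Icc ℓ r, |Polynomial.eval (x : ℝ) p - 1 / (x : ℝ)|}
      = ((1 + Real.sqrt (ℓ / r)) ^ 2 / ℓ) *
          (1 - 2 * Real.sqrt (ℓ / r) / (1 + Real.sqrt (ℓ / r))) ^ (L + 1) := by
  have hδ : 0 < ℓ / r := div_pos hℓ (hℓ.trans hℓr)
  set s := √(ℓ / r)
  have hs0 : 0 < s := sqrt_pos.2 hδ
  have hs2 : s ^ 2 = ℓ / r := sq_sqrt hδ.le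
  have hs1 : s < 1 := by
    have : ℓ / r < 1 := (div_lt_one (hℓ.trans hℓr)).2 hℓr
    nlinarith
  set σ := (1 - s) / (1 + s)
  set κ := ℓ * (1 + s) ^ 2 / (4 * s ^ 2)
  have hℓ_eq : κ * (1 - σ) ^ 2 = ℓ := by
    simp only [κ, σ]; field_simp; ring
  have hr_eq : κ * (1 + σ) ^ 2 = r := by
    have hr : r = ℓ / s ^ 2 := by rw [hs2]; field_simp
    rw [hr]; simp only [κ, σ]; field_simp; ring
  have hσ0 : 0 < σ := div_pos (by linarith) (by linarith)
  have hσ1 : σ < 1 := (div_lt_one (by linarith)).2 (by linarith)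
  have key := sInf_approxErrors_inv (κ := κ) (by positivity) hσ0 hσ1 L
  have hconst : 4 / (κ * (1 - σ ^ 2) ^ 2) = (1 + s) ^ 2 / ℓ := by
    have h1σ : 1 - σ ^ 2 = 4 * s / (1 + s) ^ 2 := by simp only [σ]; field_simp; ring
    rw [h1σ]; simp only [κ]; field_simp
  rw [hℓ_eq, hr_eq] at key
  rw [key, show 1 - 2 * s / (1 + s) = σ by simp only [σ]; field_simp; ring, ← hconst]
  ring

/-- Best uniform polynomial approximation of 1/x on [ℓ, r]:
2 E_L(1/x; [ℓ,r]) = ((1+√δ)²/ℓ)(1 − 2√δ/(1+√δ))^{L+1} with δ = ℓ/r. -/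
theorem best_approx_inv
    (ℓ r : ℝ) (hℓ : 0 < ℓ) (hℓr : ℓ < r) (L : ℕ) (hL : 0 < L) :
    2 * sInf {e : ℝ | ∃ p : Polynomial ℝ, p.natDegree ≤ L ∧
        e = ⨆ x : Set.Icc ℓ r, |Polynomial.eval (x : ℝ) p - 1 / (x : ℝ)|}
      = ((1 + Real.sqrt (ℓ / r)) ^ 2 / ℓ) *
          (1 - 2 * Real.sqrt (ℓ / r) / (1 + Real.sqrt (ℓ / r))) ^ (L + 1) :=
  best_approx_inv_general ℓ r hℓ hℓr L
end

section
/- Duality between polynomial approximation and moment matching: for a continuous function φ on a compact interval I and positive integer L, 2·E_L(φ; I) equals the maximum of E_{X~μ1}[φ(X)] − E_{X~μ0}[φ(X)] over pairs of probability distributions μ0, μ1 supported on I whose moments agree up to order L: E_{μ1}[X^l] = E_{μ0}[X^l] for l = 0,1,…,L. -/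
/-!
Let `γ t = (1, t, …, t ^ L, φ t)` and let `K` be the convex hull of `γ '' [a, b]`; in finite
dimension it is compact, and each of its points is `(moments of μ, ∫ φ ∂μ)` for a finitely
supported probability measure `μ` on `[a, b]`.

If `p` has degree `≤ L`, then `∫ p` agrees for two moment-matching measures, while `∫ φ` is
within `sup |p - φ|` of `∫ p` for each of them: this gives `≤`. Conversely, let `D` be the
largest gap `u.2 - v.2` over `u, v ∈ K` with `u.1 = v.1`, attained by compactness. For `r > D`
the point `(0, r)` lies outside the compact convex set `K - K`, and a separating functional,
rescaled to `(m, y) ↦ ℓ m + y`, turns into a polynomial `q` of degree `≤ L` for which `q + φ`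
oscillates by less than `r` on `[a, b]`; shifting `-q` by a constant approximates `φ` within
`r / 2`.
-/

open MeasureTheory Set Polynomial Pointwise

theorem isCompact_convexHull {E : Type*} [NormedAddCommGroup E] [NormedSpace ℝ E]
    [FiniteDimensional ℝ E] {s : Set E} (hs : IsCompact s) : IsCompact (convexHull ℝ s) := by
  let combination (k : ℕ) (p : (Fin k → ℝ) × (Fin k → E)) : E := ∑ i, p.1 i • p.2 i
  -- Carathéodory: at most `finrank + 1` points are needed.
  have hull_eq : convexHull ℝ s = ⋃ k ∈ Finset.range (Module.finrank ℝ E + 2),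
      combination k '' (stdSimplex ℝ (Fin k) ×ˢ univ.pi fun _ => s) := by
    refine Subset.antisymm (fun x hx => ?_) ?_
    · obtain ⟨ι, _, z, w, hzs, hz, hw0, hw1, rfl⟩ := eq_pos_convex_span_of_mem_convexHull hx
      have hcard : Fintype.card ι < Module.finrank ℝ E + 2 :=
        Nat.lt_succ_of_le (hz.card_le_finrank_succ.trans (by simpa using Submodule.finrank_le _))
      let e := (Fintype.equivFin ι).symm
      refine mem_biUnion (Finset.mem_range.2 hcard)
        ⟨(w ∘ e, z ∘ e), ⟨⟨fun i => (hw0 _).le, ?_⟩, fun i _ => hzs (mem_range_self _)⟩, ?_⟩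
      · simpa [e] using (e.sum_comp w).trans hw1
      · exact e.sum_comp fun i => w i • z i
    · simp only [iUnion_subset_iff, image_subset_iff]
      rintro k - ⟨w, z⟩ ⟨⟨hw0, hw1⟩, hz⟩
      exact (convex_convexHull ℝ s).sum_mem (fun i _ => hw0 i) hw1
        fun i _ => subset_convexHull ℝ s (hz i (mem_univ i))
  rw [hull_eq]
  exact (Finset.range _).isCompact_biUnion fun k _ =>
    ((isCompact_stdSimplex ℝ (Fin k)).prod (isCompact_univ_pi fun _ => hs)).image (by fun_prop)

theorem exists_isProbabilityMeasure_integral_eq_of_mem_convexHull {α E : Type*}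
    [MeasurableSpace α] [MeasurableSingletonClass α] [AddCommGroup E] [Module ℝ E]
    {γ : α → E} {s : Set α} {u : E} (hu : u ∈ convexHull ℝ (γ '' s)) :
    ∃ μ : Measure α, IsProbabilityMeasure μ ∧ μ sᶜ = 0 ∧
      ∀ ℓ : E →ₗ[ℝ] ℝ, ∫ t, ℓ (γ t) ∂μ = ℓ u := by
  obtain ⟨ι, _, w, z, hw0, hw1, hz, rfl⟩ := mem_convexHull_iff_exists_fintype.1 hu
  choose y hys hyz using hz
  obtain rfl : z = γ ∘ y := funext fun i => (hyz i).symm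
  refine ⟨∑ i, ENNReal.ofReal (w i) • Measure.dirac (y i), ⟨?_⟩, ?_, fun ℓ => ?_⟩
  · simp [Measure.finsetSum_apply, ← ENNReal.ofReal_sum_of_nonneg fun i _ => hw0 i, hw1]
  · simp [Measure.finsetSum_apply, Measure.dirac_apply, hys]
  · rw [integral_finsetSum_measure fun i _ => (integrable_dirac (by simp)).smul_measure
      ENNReal.ofReal_ne_top]
    simp [integral_smul_measure, ENNReal.toReal_ofReal (hw0 _)]

theorem exists_natDegree_le_eval_eq_linearMap_powers {R : Type*} [CommSemiring R] (L : ℕ)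
    (ℓ : (Fin (L + 1) → R) →ₗ[R] R) :
    ∃ q : R[X], q.natDegree ≤ L ∧ ∀ x, q.eval x = ℓ fun i => x ^ (i : ℕ) := by
  classical
  refine ⟨∑ i : Fin (L + 1), C (ℓ fun j => if i = j then 1 else 0) * X ^ (i : ℕ), ?_,
    fun x => ?_⟩
  · exact natDegree_sum_le_of_forall_le _ _ fun i _ =>
      (natDegree_C_mul_X_pow_le _ _).trans (Nat.lt_succ_iff.1 i.isLt)
  · rw [ℓ.pi_apply_eq_sum_univ]
    simp only [eval_finsetSum, eval_mul, eval_C, eval_pow, eval_X, smul_eq_mul]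
    exact Finset.sum_congr rfl fun i _ => mul_comm _ _

theorem exists_forall_abs_sub_le_half {α : Type*} {s : Set α} {g : α → ℝ} {r : ℝ}
    (h : ∀ x ∈ s, ∀ y ∈ s, g x - g y ≤ r) : ∃ c, ∀ x ∈ s, |g x - c| ≤ r / 2 := by
  rcases s.eq_empty_or_nonempty with rfl | ⟨x₀, hx₀⟩
  · simp
  have hne : (g '' s).Nonempty := ⟨g x₀, mem_image_of_mem g hx₀⟩
  have hbdd_above : BddAbove (g '' s) :=
    ⟨g x₀ + r, forall_mem_image.2 fun x hx => by linarith [h x hx x₀ hx₀]⟩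
  have hbdd_below : BddBelow (g '' s) :=
    ⟨g x₀ - r, forall_mem_image.2 fun x hx => by linarith [h x₀ hx₀ x hx]⟩
  have hosc : sSup (g '' s) ≤ sInf (g '' s) + r :=
    csSup_le hne <| forall_mem_image.2 fun x hx => sub_le_iff_le_add.1 <|
      le_csInf hne <| forall_mem_image.2 fun y hy => by linarith [h x hx y hy]
  refine ⟨(sSup (g '' s) + sInf (g '' s)) / 2, fun x hx => abs_le.2 ⟨?_, ?_⟩⟩ <;>
    linarith [le_csSup hbdd_above (mem_image_of_mem g hx),
      csInf_le hbdd_below (mem_image_of_mem g hx)]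

theorem IsCompact.le_ciSup_of_continuousOn {X : Type*} [TopologicalSpace X] {s : Set X}
    (hs : IsCompact s) {f : X → ℝ} (hf : ContinuousOn f s) {x : X} (hx : x ∈ s) :
    f x ≤ ⨆ y : s, f y :=
  le_ciSup (by simpa only [image_eq_range] using hs.bddAbove_image hf) (⟨x, hx⟩ : s)

theorem integrable_of_continuousOn_of_measure_compl_eq_zero {X E : Type*} [MeasurableSpace X]
    [TopologicalSpace X] [OpensMeasurableSpace X] [T2Space X] [NormedAddCommGroup E]
    {μ : Measure X} [IsFiniteMeasureOnCompacts μ] {s : Set X} {f : X → E} (hs : IsCompact s)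
    (hμ : μ sᶜ = 0) (hf : ContinuousOn f s) : Integrable f μ := by
  rw [← Measure.restrict_eq_self_of_ae_mem (mem_ae_iff.2 hμ)]
  exact hf.integrableOn_compact hs

theorem abs_integral_sub_integral_le {α : Type*} [MeasurableSpace α] {μ : Measure α}
    [IsProbabilityMeasure μ] {f g : α → ℝ} (hf : Integrable f μ) (hg : Integrable g μ) {e : ℝ}
    (h : ∀ᵐ x ∂μ, |f x - g x| ≤ e) : |∫ x, f x ∂μ - ∫ x, g x ∂μ| ≤ e := by
  rw [← integral_sub hf hg]
  simpa using norm_integral_le_of_norm_le_const (f := fun x => f x - g x) h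

theorem integral_eval_eq_of_integral_pow_eq {μ ν : Measure ℝ} {L : ℕ} {p : ℝ[X]}
    (hp : p.natDegree ≤ L) (hμ : ∀ l ≤ L, Integrable (· ^ l) μ)
    (hν : ∀ l ≤ L, Integrable (· ^ l) ν) (hmom : ∀ l ≤ L, ∫ t, t ^ l ∂μ = ∫ t, t ^ l ∂ν) :
    ∫ t, p.eval t ∂μ = ∫ t, p.eval t ∂ν := by
  simp only [eval_eq_sum_range' (Nat.lt_succ_of_le hp)]
  rw [integral_finsetSum _ fun l hl => (hμ l (Finset.mem_range_succ_iff.1 hl)).const_mul _,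
    integral_finsetSum _ fun l hl => (hν l (Finset.mem_range_succ_iff.1 hl)).const_mul _]
  refine Finset.sum_congr rfl fun l hl => ?_
  rw [integral_const_mul, integral_const_mul, hmom l (Finset.mem_range_succ_iff.1 hl)]

theorem integral_sub_integral_le_two_mul {a b : ℝ} {φ : ℝ → ℝ} (hφ : ContinuousOn φ (Icc a b))
    {L : ℕ} {p : ℝ[X]} (hp : p.natDegree ≤ L) {e : ℝ}
    (he : ∀ x ∈ Icc a b, |p.eval x - φ x| ≤ e) {μ0 μ1 : Measure ℝ} [IsProbabilityMeasure μ0]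
    [IsProbabilityMeasure μ1] (h0 : μ0 (Icc a b)ᶜ = 0) (h1 : μ1 (Icc a b)ᶜ = 0)
    (hmom : ∀ l ≤ L, ∫ t, t ^ l ∂μ1 = ∫ t, t ^ l ∂μ0) :
    ∫ t, φ t ∂μ1 - ∫ t, φ t ∂μ0 ≤ 2 * e := by
  have hint {μ : Measure ℝ} [IsProbabilityMeasure μ] (hμ : μ (Icc a b)ᶜ = 0) {f : ℝ → ℝ}
      (hf : ContinuousOn f (Icc a b)) : Integrable f μ :=
    integrable_of_continuousOn_of_measure_compl_eq_zero isCompact_Icc hμ hf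
  have hclose {μ : Measure ℝ} [IsProbabilityMeasure μ] (hμ : μ (Icc a b)ᶜ = 0) :
      |∫ t, p.eval t ∂μ - ∫ t, φ t ∂μ| ≤ e :=
    abs_integral_sub_integral_le (hint hμ p.continuousOn) (hint hμ hφ)
      (Filter.mem_of_superset (mem_ae_iff.2 hμ) fun x hx => he x hx)
  have hpoly : ∫ t, p.eval t ∂μ1 = ∫ t, p.eval t ∂μ0 :=
    integral_eval_eq_of_integral_pow_eq hp (fun l _ => hint h1 (continuousOn_pow l))
      (fun l _ => hint h0 (continuousOn_pow l)) hmom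
  linarith [(abs_le.1 (hclose h0)).2, (abs_le.1 (hclose h1)).1]

def momentCurve (L : ℕ) (φ : ℝ → ℝ) (t : ℝ) : (Fin (L + 1) → ℝ) × ℝ :=
  (fun i => t ^ (i : ℕ), φ t)

theorem exists_polynomial_abs_sub_le_of_notMem {L : ℕ} {φ : ℝ → ℝ} {s : Set ℝ} (hs : s.Nonempty)
    {M : Set ((Fin (L + 1) → ℝ) × ℝ)} (hM : IsClosed M) (hMconv : Convex ℝ M)
    (hsM : ∀ x ∈ s, ∀ y ∈ s, momentCurve L φ x - momentCurve L φ y ∈ M) {r : ℝ} (hr : 0 < r)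
    (hrM : ((0 : Fin (L + 1) → ℝ), r) ∉ M) :
    ∃ p : ℝ[X], p.natDegree ≤ L ∧ ∀ x ∈ s, |p.eval x - φ x| ≤ r / 2 := by
  obtain ⟨f, u, hfM, hfu⟩ := geometric_hahn_banach_closed_point hMconv hM hrM
  set e₀ : (Fin (L + 1) → ℝ) × ℝ := (0, 1)
  set β := f e₀
  have hfr : f (0, r) = r * β := by
    rw [show ((0 : Fin (L + 1) → ℝ), r) = r • e₀ by simp [e₀], map_smul, smul_eq_mul]
  have hβ : 0 < β := by
    obtain ⟨x₀, hx₀⟩ := hs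
    have h0 : 0 < u := by simpa using hfM _ (hsM x₀ hx₀ x₀ hx₀)
    exact pos_of_mul_pos_right (hfr ▸ h0.trans hfu) hr.le
  obtain ⟨q, hqL, hq⟩ :=
    exists_natDegree_le_eval_eq_linearMap_powers L (f.toLinearMap ∘ₗ LinearMap.inl ℝ _ ℝ)
  set g : ℝ → ℝ := fun x => f (momentCurve L φ x) / β
  have hg : ∀ x, g x = q.eval x / β + φ x := by
    intro x
    have hγ : momentCurve L φ x =
        LinearMap.inl ℝ _ ℝ (fun i : Fin (L + 1) => x ^ (i : ℕ)) + φ x • e₀ := by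
      ext <;> simp [momentCurve, e₀]
    rw [show g x = f (momentCurve L φ x) / β from rfl, hγ, map_add, map_smul, hq, smul_eq_mul,
      add_div, mul_div_cancel_right₀ _ hβ.ne']
    rfl
  obtain ⟨c, hc⟩ := exists_forall_abs_sub_le_half (s := s) (g := g) (r := r) fun x hx y hy => by
    rw [← sub_div, div_le_iff₀ hβ, ← map_sub]
    linarith [hfM _ (hsM x hx y hy)]
  refine ⟨C c - C β⁻¹ * q, ?_, fun x hx => ?_⟩
  · exact (natDegree_sub_le _ _).trans (max_le (by simp) ((natDegree_C_mul_le _ _).trans hqL))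
  · rw [abs_sub_comm]
    convert hc x hx using 2
    simp [hg]
    ring

theorem exists_moment_matching_forall_polynomial_approx {a b : ℝ} (hab : a ≤ b) {φ : ℝ → ℝ}
    (hφ : ContinuousOn φ (Icc a b)) (L : ℕ) :
    ∃ μ0 μ1 : Measure ℝ, IsProbabilityMeasure μ0 ∧ IsProbabilityMeasure μ1 ∧
      μ0 (Icc a b)ᶜ = 0 ∧ μ1 (Icc a b)ᶜ = 0 ∧
      (∀ l ≤ L, ∫ t, t ^ l ∂μ1 = ∫ t, t ^ l ∂μ0) ∧
      ∀ r > ∫ t, φ t ∂μ1 - ∫ t, φ t ∂μ0,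
        ∃ p : ℝ[X], p.natDegree ≤ L ∧ ∀ x ∈ Icc a b, |p.eval x - φ x| ≤ r / 2 := by
  set K := convexHull ℝ (momentCurve L φ '' Icc a b)
  have hK : IsCompact K := isCompact_convexHull <| isCompact_Icc.image_of_continuousOn <|
    (continuousOn_pi.2 fun i => continuousOn_pow _).prodMk hφ
  have hKK : IsCompact (K - K) := by
    simpa only [image_prod, image2_sub] using (hK.prod hK).image continuous_sub
  have hγK {x : ℝ} (hx : x ∈ Icc a b) : momentCurve L φ x ∈ K :=
    subset_convexHull ℝ _ (mem_image_of_mem _ hx)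
  have hzero : (0 : (Fin (L + 1) → ℝ) × ℝ) ∈ (K - K) ∩ {z | z.1 = 0} :=
    ⟨⟨_, hγK (left_mem_Icc.2 hab), _, hγK (left_mem_Icc.2 hab), sub_self _⟩, rfl⟩
  -- `u - v` maximizes the `φ`-gap over pairs of points of `K` with equal moments
  obtain ⟨_, ⟨⟨u, hu, v, hv, rfl⟩, huv⟩, hmax⟩ :=
    (hKK.inter_right (isClosed_eq continuous_fst continuous_const)).exists_isMaxOn ⟨0, hzero⟩
      continuous_snd.continuousOn
  obtain ⟨μ1, hμ1, h1, hint1⟩ := exists_isProbabilityMeasure_integral_eq_of_mem_convexHull hu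
  obtain ⟨μ0, hμ0, h0, hint0⟩ := exists_isProbabilityMeasure_integral_eq_of_mem_convexHull hv
  refine ⟨μ0, μ1, hμ0, hμ1, h0, h1, fun l hl => ?_, fun r hr => ?_⟩
  · have hcoord (ν : Measure ℝ) : ∫ t, t ^ l ∂ν =
        ∫ t, (LinearMap.proj (⟨l, Nat.lt_succ_of_le hl⟩ : Fin (L + 1)) ∘ₗ LinearMap.fst ℝ _ ℝ)
          (momentCurve L φ t) ∂ν := rfl
    rw [hcoord, hcoord, hint1, hint0]
    exact congrFun (sub_eq_zero.1 huv) _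
  · have hgap : ∫ t, φ t ∂μ1 - ∫ t, φ t ∂μ0 = (u - v).2 :=
      congrArg₂ (· - ·) (hint1 (LinearMap.snd ℝ _ ℝ)) (hint0 (LinearMap.snd ℝ _ ℝ))
    have hgap_nonneg : 0 ≤ (u - v).2 := isMaxOn_iff.1 hmax 0 hzero
    refine exists_polynomial_abs_sub_le_of_notMem ⟨a, left_mem_Icc.2 hab⟩ hKK.isClosed
      ((convex_convexHull ℝ _).sub (convex_convexHull ℝ _))
      (fun x hx y hy => sub_mem_sub (hγK hx) (hγK hy)) (by linarith) fun hrK => ?_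
    linarith [isMaxOn_iff.1 hmax _ ⟨hrK, rfl⟩]

/-- Duality between best polynomial approximation and moment matching:
2 E_L(φ; [a,b]) is the maximum of E_{μ1}[φ] − E_{μ0}[φ] over pairs of probability
measures on [a,b] whose moments agree up to order L. -/
theorem approx_moment_duality
    (a b : ℝ) (hab : a ≤ b) (φ : ℝ → ℝ)
    (hφ : ContinuousOn φ (Set.Icc a b)) (L : ℕ) :
    IsGreatest
      {x : ℝ | ∃ μ0 μ1 : Measure ℝ,
        IsProbabilityMeasure μ0 ∧ IsProbabilityMeasure μ1 ∧
        μ0 (Set.Icc a b)ᶜ = 0 ∧ μ1 (Set.Icc a b)ᶜ = 0 ∧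
        (∀ l : ℕ, l ≤ L → (∫ t, t ^ l ∂μ1) = ∫ t, t ^ l ∂μ0) ∧
        x = (∫ t, φ t ∂μ1) - ∫ t, φ t ∂μ0}
      (2 * sInf {e : ℝ | ∃ p : Polynomial ℝ, p.natDegree ≤ L ∧
        e = ⨆ x : Set.Icc a b, |Polynomial.eval (x : ℝ) p - φ x|}) := by
  set S := {x : ℝ | ∃ μ0 μ1 : Measure ℝ,
    IsProbabilityMeasure μ0 ∧ IsProbabilityMeasure μ1 ∧
    μ0 (Set.Icc a b)ᶜ = 0 ∧ μ1 (Set.Icc a b)ᶜ = 0 ∧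
    (∀ l : ℕ, l ≤ L → (∫ t, t ^ l ∂μ1) = ∫ t, t ^ l ∂μ0) ∧
    x = (∫ t, φ t ∂μ1) - ∫ t, φ t ∂μ0}
  set E := {e : ℝ | ∃ p : Polynomial ℝ, p.natDegree ≤ L ∧
    e = ⨆ x : Set.Icc a b, |Polynomial.eval (x : ℝ) p - φ x|}
  have hE : BddBelow E :=
    ⟨0, by rintro _ ⟨p, -, rfl⟩; exact Real.iSup_nonneg fun _ => abs_nonneg _⟩
  have hweak : ∀ x ∈ S, x ≤ 2 * sInf E := by
    rintro _ ⟨μ0, μ1, _, _, h0, h1, hmom, rfl⟩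
    rw [← div_le_iff₀' two_pos]
    refine le_csInf ⟨_, 0, by simp, rfl⟩ ?_
    rintro _ ⟨p, hp, rfl⟩
    rw [div_le_iff₀' two_pos]
    exact integral_sub_integral_le_two_mul hφ hp
      (fun x hx => isCompact_Icc.le_ciSup_of_continuousOn
        (p.continuousOn.sub hφ).abs hx) h0 h1 hmom
  obtain ⟨μ0, μ1, hμ0, hμ1, h0, h1, hmom, happrox⟩ :=
    exists_moment_matching_forall_polynomial_approx hab hφ L
  have hmem : ∫ t, φ t ∂μ1 - ∫ t, φ t ∂μ0 ∈ S := ⟨μ0, μ1, hμ0, hμ1, h0, h1, hmom, rfl⟩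
  have hstrong : sInf E ≤ (∫ t, φ t ∂μ1 - ∫ t, φ t ∂μ0) / 2 := by
    refine le_of_forall_pos_le_add fun ε hε => ?_
    obtain ⟨p, hp, hpφ⟩ := happrox _ (lt_add_of_pos_right _ (mul_pos two_pos hε))
    have : Nonempty (Icc a b) := (nonempty_Icc.2 hab).to_subtype
    calc sInf E ≤ ⨆ x : Icc a b, |p.eval (x : ℝ) - φ x| := csInf_le hE ⟨p, hp, rfl⟩
      _ ≤ _ := ciSup_le fun x => (hpφ x x.2).trans_eq (by ring)
  exact ⟨le_antisymm (by linarith) (hweak _ hmem) ▸ hmem, hweak⟩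
end

section
/- TV distance between Poisson mixtures via moment matching: if X, X′ are random variables supported on [0, b] with E[X^j] = E[(X′)^j] for j = 1,…,L and L > 2eb, then TV( E_X[Poi(X)], E_{X′}[Poi(X′)] ) ≤ (2eb/L)^L. -/
/-! Expanding `exp (-x)` in its power series and integrating termwise, the difference of the
`j`-th mixture probabilities is `∑ₖ (-1)ᵏ Δ_{j+k} / (j! k!)`, where `Δₙ` is the difference of the
`n`-th moments. `Δₙ` vanishes for `n ≤ L` and is at most `2 bⁿ` in absolute value, so it is at most
`2 bⁿ tⁿ⁻ᴸ` for any `t ≥ 1` (the Chernoff trick). With this weight the double series sums to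
`2 exp (2 b t) / tᴸ`, and `t = L / (2 b)` gives `2 (2 e b / L)ᴸ`. -/

open MeasureTheory Nat Real

lemma Real.hasSum_pow_div_factorial (x : ℝ) : HasSum (fun n ↦ x ^ n / n !) (exp x) := by
  rw [exp_eq_exp_ℝ]
  exact NormedSpace.expSeries_div_hasSum_exp x

section Moments

variable {ν : Measure ℝ} {b : ℝ}

lemma hasSum_integral_exp_neg_mul_pow [IsFiniteMeasure ν] (hν : ∀ᵐ x ∂ν, |x| ≤ b) (j : ℕ) :
    HasSum (fun k ↦ (-1) ^ k / k ! * ∫ x, x ^ (j + k) ∂ν) (∫ x, exp (-x) * x ^ j ∂ν) := by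
  have hpow : ∀ k, ∀ᵐ x ∂ν, ‖(-1 : ℝ) ^ k / k ! * x ^ (j + k)‖ ≤ b ^ (j + k) / k ! := by
    intro k
    filter_upwards [hν] with x hx
    simp only [norm_mul, norm_div, norm_pow, norm_neg, norm_one, one_pow, Real.norm_eq_abs,
      Nat.abs_cast, one_div_mul_eq_div]
    gcongr
  have hsum : Summable fun k ↦ b ^ (j + k) / k ! := by
    simpa only [pow_add, mul_div_assoc] using
      ((hasSum_pow_div_factorial b).mul_left (b ^ j)).summable
  have hseries : ∀ x : ℝ, HasSum (fun k ↦ (-1 : ℝ) ^ k / k ! * x ^ (j + k)) (exp (-x) * x ^ j) := by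
    intro x
    have hterm : ∀ k : ℕ, (-1 : ℝ) ^ k / k ! * x ^ (j + k) = (-x) ^ k / k ! * x ^ j := fun k ↦ by
      rw [neg_pow, pow_add]
      ring
    simpa only [hterm] using (hasSum_pow_div_factorial (-x)).mul_right (x ^ j)
  simp_rw [← integral_const_mul]
  exact hasSum_integral_of_dominated_convergence (fun k _ ↦ b ^ (j + k) / k !)
    (fun k ↦ by fun_prop) hpow (.of_forall fun _ ↦ hsum) (integrable_const _)
    (.of_forall hseries)

lemma abs_integral_pow_le [IsProbabilityMeasure ν] (hν : ∀ᵐ x ∂ν, |x| ≤ b) (n : ℕ) :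
    |∫ x, x ^ n ∂ν| ≤ b ^ n := by
  have := norm_integral_le_of_norm_le_const (μ := ν) (f := fun x ↦ x ^ n) (C := b ^ n) <| by
    filter_upwards [hν] with x hx
    rw [norm_pow, Real.norm_eq_abs]
    exact pow_le_pow_left₀ (abs_nonneg x) hx n
  simpa using this

end Moments

section MatchingMoments

variable {μ μ' : Measure ℝ} [IsProbabilityMeasure μ] [IsProbabilityMeasure μ'] {b t : ℝ} {L : ℕ}

lemma abs_integral_pow_sub_le (hμ : ∀ᵐ x ∂μ, |x| ≤ b) (hμ' : ∀ᵐ x ∂μ', |x| ≤ b)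
    (hmom : ∀ n ≤ L, ∫ x, x ^ n ∂μ = ∫ x, x ^ n ∂μ') (ht : 1 ≤ t) (n : ℕ) :
    |∫ x, x ^ n ∂μ - ∫ x, x ^ n ∂μ'| ≤ 2 * (b * t) ^ n / t ^ L := by
  obtain ⟨x, hx⟩ := hμ.exists
  have hb : 0 ≤ b := (abs_nonneg x).trans hx
  rcases le_or_gt n L with hn | hn
  · rw [hmom n hn, sub_self, abs_zero]
    positivity
  calc |∫ x, x ^ n ∂μ - ∫ x, x ^ n ∂μ'|
      ≤ |∫ x, x ^ n ∂μ| + |∫ x, x ^ n ∂μ'| := abs_sub _ _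
    _ ≤ 2 * b ^ n := by linarith [abs_integral_pow_le hμ n, abs_integral_pow_le hμ' n]
    _ ≤ 2 * b ^ n * (t ^ n / t ^ L) := by
      have : 1 ≤ t ^ n / t ^ L := by
        rw [one_le_div (by positivity)]
        exact pow_le_pow_right₀ ht hn.le
      nlinarith [pow_nonneg hb n]
    _ = 2 * (b * t) ^ n / t ^ L := by ring

lemma abs_integral_exp_neg_mul_pow_sub_le (hμ : ∀ᵐ x ∂μ, |x| ≤ b) (hμ' : ∀ᵐ x ∂μ', |x| ≤ b)
    (hmom : ∀ n ≤ L, ∫ x, x ^ n ∂μ = ∫ x, x ^ n ∂μ') (ht : 1 ≤ t) (j : ℕ) :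
    |∫ x, exp (-x) * x ^ j ∂μ - ∫ x, exp (-x) * x ^ j ∂μ'|
      ≤ 2 * (b * t) ^ j / t ^ L * exp (b * t) := by
  refine ((hasSum_integral_exp_neg_mul_pow hμ j).sub
    (hasSum_integral_exp_neg_mul_pow hμ' j)).norm_le_of_bounded
    ((hasSum_pow_div_factorial (b * t)).mul_left (2 * (b * t) ^ j / t ^ L)) fun k ↦ ?_
  simp only [← mul_sub, norm_mul, norm_div, norm_pow, norm_neg, norm_one, one_pow,
    Real.norm_eq_abs, Nat.abs_cast]
  calc 1 / (k ! : ℝ) * |∫ x, x ^ (j + k) ∂μ - ∫ x, x ^ (j + k) ∂μ'|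
      ≤ 1 / k ! * (2 * (b * t) ^ (j + k) / t ^ L) := by
        gcongr
        exact abs_integral_pow_sub_le hμ hμ' hmom ht _
    _ = 2 * (b * t) ^ j / t ^ L * ((b * t) ^ k / k !) := by ring

lemma tsum_abs_integral_poisson_sub_le (hμ : ∀ᵐ x ∂μ, |x| ≤ b) (hμ' : ∀ᵐ x ∂μ', |x| ≤ b)
    (hmom : ∀ n ≤ L, ∫ x, x ^ n ∂μ = ∫ x, x ^ n ∂μ') (ht : 1 ≤ t) :
    ∑' j : ℕ, |∫ x, exp (-x) * x ^ j / j ! ∂μ - ∫ x, exp (-x) * x ^ j / j ! ∂μ'|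
      ≤ 2 * exp (2 * b * t) / t ^ L := by
  have hbound : ∀ j : ℕ, |∫ x, exp (-x) * x ^ j / j ! ∂μ - ∫ x, exp (-x) * x ^ j / j ! ∂μ'|
      ≤ 2 * exp (b * t) / t ^ L * ((b * t) ^ j / j !) := fun j ↦ by
    rw [integral_div, integral_div, ← sub_div, abs_div, Nat.abs_cast]
    calc |∫ x, exp (-x) * x ^ j ∂μ - ∫ x, exp (-x) * x ^ j ∂μ'| / j !
        ≤ 2 * (b * t) ^ j / t ^ L * exp (b * t) / j ! := by
          gcongr
          exact abs_integral_exp_neg_mul_pow_sub_le hμ hμ' hmom ht j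
      _ = 2 * exp (b * t) / t ^ L * ((b * t) ^ j / j !) := by ring
  have hsum := (hasSum_pow_div_factorial (b * t)).mul_left (2 * exp (b * t) / t ^ L)
  have hexp : 2 * exp (b * t) / t ^ L * exp (b * t) = 2 * exp (2 * b * t) / t ^ L := by
    rw [show 2 * b * t = b * t + b * t by ring, exp_add]
    ring
  rw [← hexp]
  exact hasSum_le hbound (hsum.summable.of_nonneg_of_le (fun _ ↦ abs_nonneg _) hbound).hasSum hsum

end MatchingMoments

lemma ae_abs_le_of_measure_compl_Icc_eq_zero {ν : Measure ℝ} {b : ℝ}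
    (h : ν (Set.Icc 0 b)ᶜ = 0) : ∀ᵐ x ∂ν, |x| ≤ b := by
  filter_upwards [mem_ae_iff.mpr h] with x hx
  exact abs_le.mpr ⟨by linarith [hx.1, hx.2], hx.2⟩

/-- TV distance between Poisson mixtures via moment matching: if the laws μ, μ' are
supported on [0,b] with matching moments up to order L > 2eb, then the total
variation distance between the mixtures E[Poi(X)] and E[Poi(X')] is at most
(2eb/L)^L. -/
theorem tv_poisson_mixtures
    (b : ℝ) (hb : 0 < b) (L : ℕ)
    (hL : 2 * Real.exp 1 * b < (L : ℝ))
    (μ μ' : Measure ℝ) [IsProbabilityMeasure μ] [IsProbabilityMeasure μ']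
    (hμ : μ (Set.Icc (0 : ℝ) b)ᶜ = 0) (hμ' : μ' (Set.Icc (0 : ℝ) b)ᶜ = 0)
    (hmom : ∀ j : ℕ, 1 ≤ j → j ≤ L → (∫ x, x ^ j ∂μ) = ∫ x, x ^ j ∂μ') :
    (1 / 2) * ∑' j : ℕ,
        |(∫ x, Real.exp (-x) * x ^ j / (j.factorial : ℝ) ∂μ)
          - ∫ x, Real.exp (-x) * x ^ j / (j.factorial : ℝ) ∂μ'|
      ≤ (2 * Real.exp 1 * b / (L : ℝ)) ^ L := by
  have hmom₀ : ∀ n ≤ L, ∫ x, x ^ n ∂μ = ∫ x, x ^ n ∂μ' := fun n hn ↦ by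
    rcases n.eq_zero_or_pos with rfl | hn₀
    · simp
    · exact hmom n hn₀ hn
  have hLb : 2 * b < L := by nlinarith [add_one_le_exp 1]
  have ht : 1 ≤ L / (2 * b) := by rw [one_le_div (by positivity)]; exact hLb.le
  calc (1 / 2) * ∑' j : ℕ, |∫ x, exp (-x) * x ^ j / j ! ∂μ - ∫ x, exp (-x) * x ^ j / j ! ∂μ'|
      ≤ (1 / 2) * (2 * exp (2 * b * (L / (2 * b))) / (L / (2 * b)) ^ L) := by
        gcongr
        exact tsum_abs_integral_poisson_sub_le (ae_abs_le_of_measure_compl_Icc_eq_zero hμ)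
          (ae_abs_le_of_measure_compl_Icc_eq_zero hμ') hmom₀ ht
    _ = (2 * exp 1 * b / L) ^ L := by
        rw [mul_div_cancel₀ _ (by positivity), ← exp_one_pow, ← mul_div_assoc, ← mul_assoc,
          one_div_mul_cancel two_ne_zero, one_mul, ← div_pow, div_div_eq_mul_div]
        ring
end

section
/- Le Cam's method with fuzzy hypotheses: let {P_θ : θ ∈ Θ} be a family of distributions, T : Θ → R a functional, and Π0, Π1 priors on Θ with induced marginals M0, M1 on the observation Z. If Π0(θ : T(θ) ≤ ξ − s) ≥ 1 − β0, Π1(θ : T(θ) ≥ ξ + s) ≥ 1 − β1, and TV(M1, M0) ≤ η < 1, then inf over estimators T̂ of sup_{θ∈Θ} P_θ( |T̂(Z) − T(θ)| ≥ s ) ≥ (1 − η − β0 − β1)/2. -/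
open MeasureTheory
open scoped ENNReal

/-!
Let `R = sup_θ P_θ(|T̂ - T(θ)| ≥ s)` and test with `A = {T̂ ≥ ξ}`. On the `Π0`-likely set
`{T ≤ ξ - s}` the event `A` forces an error of size `s`, so `M0(A) ≤ R + β0`; symmetrically
`M1(Aᶜ) ≤ R + β1`. Hence `1 = M1(A) + M1(Aᶜ) ≤ M0(A) + η + M1(Aᶜ) ≤ 2R + η + β0 + β1`.
-/

section

variable {α β : Type*} [MeasurableSpace α] [MeasurableSpace β]

/-- Stated with `1 - μ S` rather than `μ Sᶜ` so that `S` need not be measurable. -/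
theorem lintegral_le_add_one_sub_measure {μ : Measure α} [IsProbabilityMeasure μ]
    {f : α → ℝ≥0∞} (hf : Measurable f) (hf_le_one : ∀ a, f a ≤ 1) {S : Set α} {r : ℝ≥0∞}
    (hS : ∀ a ∈ S, f a ≤ r) : ∫⁻ a, f a ∂μ ≤ r + (1 - μ S) := by
  set G := {a | f a ≤ r}
  have hG : MeasurableSet G := measurableSet_le hf measurable_const
  have hf_le : ∀ a, f a ≤ r + Gᶜ.indicator 1 a := fun a => by
    by_cases ha : a ∈ G
    · rw [Set.indicator_of_notMem (Set.notMem_compl_iff.mpr ha), add_zero]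
      exact ha
    · rw [Set.indicator_of_mem ha, Pi.one_apply]
      exact (hf_le_one a).trans le_add_self
  calc ∫⁻ a, f a ∂μ ≤ ∫⁻ a, r + Gᶜ.indicator 1 a ∂μ := lintegral_mono hf_le
    _ = r + μ Gᶜ := by
      rw [lintegral_add_left measurable_const, lintegral_const, measure_univ, mul_one,
        lintegral_indicator_one hG.compl]
    _ = r + (1 - μ G) := by rw [prob_compl_eq_one_sub hG]
    _ ≤ r + (1 - μ S) := by gcongr; exact hS

theorem toReal_bind_apply_le_add_one_sub {μ : Measure α} [IsProbabilityMeasure μ]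
    {P : α → Measure β} [∀ a, IsProbabilityMeasure (P a)] (hP : Measurable P)
    {A : Set β} (hA : MeasurableSet A) {S : Set α} {r : ℝ≥0∞} (hr : r ≠ ∞)
    (hS : ∀ a ∈ S, P a A ≤ r) :
    ((μ.bind P) A).toReal ≤ r.toReal + (1 - (μ S).toReal) := by
  have hbound : (μ.bind P) A ≤ r + (1 - μ S) := by
    rw [Measure.bind_apply hA hP.aemeasurable]
    exact lintegral_le_add_one_sub_measure (Measure.measurable_measure.mp hP A hA)
      (fun a => prob_le_one) hS
  have hfin : r + (1 - μ S) ≠ ∞ :=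
    ENNReal.add_ne_top.mpr ⟨hr, ENNReal.sub_ne_top ENNReal.one_ne_top⟩
  calc ((μ.bind P) A).toReal ≤ (r + (1 - μ S)).toReal := ENNReal.toReal_mono hfin hbound
    _ = r.toReal + (1 - (μ S).toReal) := by
      rw [ENNReal.toReal_add hr (ENNReal.sub_ne_top ENNReal.one_ne_top),
        ENNReal.toReal_sub_of_le prob_le_one ENNReal.one_ne_top, ENNReal.toReal_one]

end

theorem lecam_fuzzy_general
    {Θ Z : Type*} [MeasurableSpace Θ] [MeasurableSpace Z]
    (P : Θ → Measure Z) (hP : ∀ θ, IsProbabilityMeasure (P θ))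
    (hPmeas : Measurable P)
    (T : Θ → ℝ) (Pr0 Pr1 : Measure Θ)
    [IsProbabilityMeasure Pr0] [IsProbabilityMeasure Pr1]
    (ξ s : ℝ)
    (β0 β1 η : ℝ)
    (h0 : 1 - β0 ≤ (Pr0 {θ | T θ ≤ ξ - s}).toReal)
    (h1 : 1 - β1 ≤ (Pr1 {θ | ξ + s ≤ T θ}).toReal)
    (hTV : ∀ A : Set Z, MeasurableSet A →
      |((Pr1.bind P) A).toReal - ((Pr0.bind P) A).toReal| ≤ η) :
    ∀ That : Z → ℝ, Measurable That →
      (1 - η - β0 - β1) / 2 ≤ ⨆ θ, ((P θ) {z | s ≤ |That z - T θ|}).toReal := by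
  intro That hThat
  set E : Θ → Set Z := fun θ => {z | s ≤ |That z - T θ|}
  set R : ℝ≥0∞ := ⨆ θ, P θ (E θ)
  set A : Set Z := That ⁻¹' Set.Ici ξ
  have hA : MeasurableSet A := hThat measurableSet_Ici
  have hR : R ≠ ∞ := (iSup_le fun θ => prob_le_one).trans_lt ENNReal.one_lt_top |>.ne
  have hA_err : ∀ θ, T θ ≤ ξ - s → A ⊆ E θ := fun θ hθ z (hz : ξ ≤ That z) =>
    (show s ≤ That z - T θ by linarith).trans (le_abs_self _)
  have hAc_err : ∀ θ, ξ + s ≤ T θ → Aᶜ ⊆ E θ := fun θ hθ z (hz : ¬ξ ≤ That z) =>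
    (show s ≤ -(That z - T θ) by linarith).trans (neg_le_abs _)
  have hM0 := toReal_bind_apply_le_add_one_sub (μ := Pr0) (S := {θ | T θ ≤ ξ - s})
    hPmeas hA hR fun θ hθ =>
      (measure_mono (hA_err θ hθ)).trans (le_iSup (fun θ => P θ (E θ)) θ)
  have hM1 := toReal_bind_apply_le_add_one_sub (μ := Pr1) (S := {θ | ξ + s ≤ T θ})
    hPmeas hA.compl hR fun θ hθ =>
      (measure_mono (hAc_err θ hθ)).trans (le_iSup (fun θ => P θ (E θ)) θ)
  have hM1_compl : ((Pr1.bind P) Aᶜ).toReal = 1 - ((Pr1.bind P) A).toReal := by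
    have := isProbabilityMeasure_bind (m := Pr1) hPmeas.aemeasurable
      (Filter.Eventually.of_forall hP)
    rw [prob_compl_eq_one_sub hA, ENNReal.toReal_sub_of_le prob_le_one ENNReal.one_ne_top,
      ENNReal.toReal_one]
  have hsup : (⨆ θ, (P θ (E θ)).toReal) = R.toReal :=
    (ENNReal.toReal_iSup fun θ => measure_ne_top _ _).symm
  rw [hsup]
  linarith [(abs_le.mp (hTV A hA)).2]

/-- Le Cam's method with fuzzy hypotheses: any estimator of the functional T based
on an observation Z incurs, for some parameter, error at least s with probability
at least (1 − η − β0 − β1)/2. -/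
theorem lecam_fuzzy
    {Θ Z : Type*} [MeasurableSpace Θ] [MeasurableSpace Z]
    (P : Θ → Measure Z) (hP : ∀ θ, IsProbabilityMeasure (P θ))
    (hPmeas : Measurable P)
    (T : Θ → ℝ) (Pr0 Pr1 : Measure Θ)
    [IsProbabilityMeasure Pr0] [IsProbabilityMeasure Pr1]
    (ξ s : ℝ) (hs : 0 < s)
    (β0 β1 η : ℝ) (hβ0 : 0 ≤ β0) (hβ0' : β0 < 1) (hβ1 : 0 ≤ β1) (hβ1' : β1 < 1)
    (hη : 0 ≤ η) (hη1 : η < 1)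
    (h0 : 1 - β0 ≤ (Pr0 {θ | T θ ≤ ξ - s}).toReal)
    (h1 : 1 - β1 ≤ (Pr1 {θ | ξ + s ≤ T θ}).toReal)
    (hTV : ∀ A : Set Z, MeasurableSet A →
      |((Pr1.bind P) A).toReal - ((Pr0.bind P) A).toReal| ≤ η) :
    ∀ That : Z → ℝ, Measurable That →
      (1 - η - β0 - β1) / 2 ≤ ⨆ θ, ((P θ) {z | s ≤ |That z - T θ|}).toReal :=
  lecam_fuzzy_general P hP hPmeas T Pr0 Pr1 ξ s β0 β1 η h0 h1 hTV
end

section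
/- Bias formula for the Chebyshev estimator under Poisson sampling: with n(a) ~ Poi(n π_b(a)) independently and V̂_C = Σ_a π_t(a) r̂(a) g_L(n(a)), where g_L(j) = a_j·j!/n^j + 1 for 0 ≤ j ≤ L (in particular g_L(0) = 0) and g_L(j) = 1 for j > L, the bias equals E[V̂_C] − V(π_t) = Σ_a π_t(a) r(a) e^{−n π_b(a)} P_L(π_b(a)), where P_L(x) = Σ_{d=0}^L a_d x^d is the shifted/scaled Chebyshev polynomial P_L(x) = −Q_L((2x−r−ℓ)/(r−ℓ)) / Q_L((−r−ℓ)/(r−ℓ)). -/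
/-!
Splitting the integral along the fibres `n(a) = j`, the estimator's expectation for action `a`
is `r(a) ∑ⱼ Poi(m)(j) g(j)` with `m = n π_b(a)` (the term `j = 0` drops out because `g(0) = 0`).
Since `deg P ≤ L`, `g(j) = a_j j!/n^j + 1` for every `j`, and
`Poi(m)(j) a_j j!/n^j = e^{-m} a_j π_b(a)^j`, so the series sums to `1 + e^{-m} P(π_b(a))`.
The shifted Chebyshev polynomial has degree `≤ L` and `P(0) = -1`, because `T_L` does not vanish
on `(-∞, -1]`.
-/

open MeasureTheory Polynomial Real
open scoped Nat

lemma Polynomial.Chebyshev.eval_T_real_ne_zero_of_le_neg_one (L : ℤ) {x : ℝ} (hx : x ≤ -1) :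
    (T ℝ L).eval x ≠ 0 := by
  have hpos := one_le_negOnePow_mul_eval_T_real L hx
  intro hzero
  rw [hzero, mul_zero] at hpos
  linarith

lemma natDegree_C_mul_T_comp_linear_le {R : Type*} [CommRing R] [IsDomain R] [NeZero (2 : R)]
    (L : ℕ) (a b c : R) : (C c * (Chebyshev.T R L).comp (C a * X - C b)).natDegree ≤ L := by
  have hlin : (C a * X - C b).natDegree ≤ 1 := by compute_degree
  calc (C c * (Chebyshev.T R L).comp (C a * X - C b)).natDegree
      ≤ (Chebyshev.T R L).natDegree * (C a * X - C b).natDegree :=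
        (natDegree_C_mul_le _ _).trans natDegree_comp_le
    _ ≤ L * 1 := by rw [Chebyshev.natDegree_T]; exact Nat.mul_le_mul (by simp) hlin
    _ = L := mul_one L

lemma coeff_zero_C_mul_T_comp_linear {K : Type*} [Field K] (L : ℕ) (a b : K)
    (hT : (Chebyshev.T K L).eval (-b) ≠ 0) :
    (C (-(1 / (Chebyshev.T K L).eval (-b))) * (Chebyshev.T K L).comp (C a * X - C b)).coeff 0
      = -1 := by
  rw [coeff_zero_eq_eval_zero]
  simp only [eval_mul, eval_C, eval_comp, eval_sub, eval_X, mul_zero, zero_sub]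
  field_simp

lemma hasSum_exp_neg_mul_pow_div_factorial (m : ℝ) :
    HasSum (fun j : ℕ => exp (-m) * m ^ j / j !) 1 := by
  have h := (NormedSpace.expSeries_div_hasSum_exp m).mul_left (exp (-m))
  rw [← exp_eq_exp_ℝ, ← exp_add, neg_add_cancel, exp_zero] at h
  simpa only [mul_div_assoc] using h

lemma Polynomial.hasSum_coeff_mul_pow {R : Type*} [CommSemiring R] [TopologicalSpace R]
    (P : R[X]) (x : R) : HasSum (fun j => P.coeff j * x ^ j) (P.eval x) := by
  rw [eval_eq_sum_range]
  refine hasSum_sum_of_ne_finset_zero fun j hj => ?_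
  rw [coeff_eq_zero_of_natDegree_lt (by simpa using hj), zero_mul]

lemma hasSum_poisson_mul_coeff_factorial_div_pow_add_one (P : ℝ[X]) {n : ℝ} (hn : n ≠ 0)
    (x : ℝ) :
    HasSum (fun j : ℕ => exp (-(n * x)) * (n * x) ^ j / j ! * (P.coeff j * j ! / n ^ j + 1))
      (1 + exp (-(n * x)) * P.eval x) := by
  have hcoeff : HasSum
      (fun j : ℕ => exp (-(n * x)) * (n * x) ^ j / j ! * (P.coeff j * j ! / n ^ j))
      (exp (-(n * x)) * P.eval x) := by
    refine ((P.hasSum_coeff_mul_pow x).mul_left (exp (-(n * x)))).congr_fun fun j => ?_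
    rw [mul_pow]
    field_simp
  exact ((hasSum_exp_neg_mul_pow_div_factorial (n * x)).add hcoeff).congr_fun fun j => by ring

lemma hasSum_setIntegral_snd_mul_comp_fst {α : Type*} [MeasurableSpace α]
    [MeasurableSingletonClass α] [Countable α] {μ : Measure (α × ℝ)} {f : α → ℝ}
    (hf : Integrable (fun p => p.2 * f p.1) μ) :
    HasSum (fun j => (∫ p in {p | p.1 = j}, p.2 ∂μ) * f j) (∫ p, p.2 * f p.1 ∂μ) := by
  have hmeas : ∀ j, MeasurableSet {p : α × ℝ | p.1 = j} := fun j =>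
    measurable_fst (measurableSet_singleton j)
  have hdisj : Pairwise (Function.onFun Disjoint fun j => {p : α × ℝ | p.1 = j}) :=
    fun i j hij => Set.disjoint_left.mpr fun p hi hj => hij (hi.symm.trans hj)
  have hcover : (⋃ j, {p : α × ℝ | p.1 = j}) = Set.univ := by
    ext p; simp
  have hsum := hasSum_integral_iUnion hmeas hdisj (by rw [hcover]; exact hf.integrableOn)
  rw [hcover, setIntegral_univ] at hsum
  refine hsum.congr_fun fun j => ?_
  rw [← integral_mul_const]
  exact setIntegral_congr_fun (hmeas j) fun p (hp : p.1 = j) => by rw [hp]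

lemma integral_snd_mul_coeff_factorial_div_pow_add_one {μ : Measure (ℕ × ℝ)} {P : ℝ[X]}
    (hP : P.coeff 0 = -1) {n x ρ : ℝ} (hn : n ≠ 0)
    (hmean : ∀ j, 1 ≤ j →
      ∫ p in {p : ℕ × ℝ | p.1 = j}, p.2 ∂μ = exp (-(n * x)) * (n * x) ^ j / j ! * ρ)
    (hint : Integrable (fun p : ℕ × ℝ => p.2 * (P.coeff p.1 * p.1 ! / n ^ p.1 + 1)) μ) :
    ∫ p : ℕ × ℝ, p.2 * (P.coeff p.1 * p.1 ! / n ^ p.1 + 1) ∂μ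
      = ρ + ρ * exp (-(n * x)) * P.eval x := by
  have hterm : ∀ j, (∫ p in {p : ℕ × ℝ | p.1 = j}, p.2 ∂μ) * (P.coeff j * j ! / n ^ j + 1) =
      ρ * (exp (-(n * x)) * (n * x) ^ j / j ! * (P.coeff j * j ! / n ^ j + 1)) := by
    intro j
    rcases j.eq_zero_or_pos with rfl | hj
    · simp [hP]
    · rw [hmean j hj]
      ring
  have hsum :=
    ((hasSum_poisson_mul_coeff_factorial_div_pow_add_one P hn x).mul_left ρ).congr_fun hterm
  rw [(hasSum_setIntegral_snd_mul_comp_fst hint).unique hsum]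
  ring

theorem chebyshev_estimator_bias_general
    (k n L : ℕ) (hn : 0 < n)
    (ℓ r' : ℝ) (hℓ : 0 < ℓ) (hlr : ℓ < r')
    (πb πt r : Fin k → ℝ)
    (P : Polynomial ℝ)
    (hP : P = Polynomial.C
          (-(1 / ((Polynomial.Chebyshev.T ℝ (L : ℤ)).eval ((-r' - ℓ) / (r' - ℓ))))) *
        ((Polynomial.Chebyshev.T ℝ (L : ℤ)).comp
          (Polynomial.C (2 / (r' - ℓ)) * Polynomial.X
            - Polynomial.C ((r' + ℓ) / (r' - ℓ)))))
    (g : ℕ → ℝ)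
    (hg : ∀ j, g j =
      if j ≤ L then P.coeff j * (j.factorial : ℝ) / (n : ℝ) ^ j + 1 else 1)
    (μ : Fin k → Measure (ℕ × ℝ))
    (hmean : ∀ a (j : ℕ), 1 ≤ j →
      (∫ p in {p : ℕ × ℝ | p.1 = j}, p.2 ∂(μ a)) =
        (Real.exp (-((n : ℝ) * πb a)) * ((n : ℝ) * πb a) ^ j / (j.factorial : ℝ)) * r a)
    (hint : ∀ a, Integrable (fun p : ℕ × ℝ => p.2 * g p.1) (μ a)) :
    (∑ a, πt a * ∫ p : ℕ × ℝ, p.2 * g p.1 ∂(μ a)) - (∑ a, πt a * r a)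
      = ∑ a, πt a * r a * Real.exp (-((n : ℝ) * πb a)) * P.eval (πb a) := by
  have hcenter : (-r' - ℓ) / (r' - ℓ) = -((r' + ℓ) / (r' - ℓ)) := by ring
  have hle : -((r' + ℓ) / (r' - ℓ)) ≤ -1 := by
    rw [neg_le_neg_iff, one_le_div₀ (by linarith)]
    linarith
  rw [hcenter] at hP
  have hdeg : P.natDegree ≤ L := hP ▸ natDegree_C_mul_T_comp_linear_le L _ _ _
  have hcoeff_zero : P.coeff 0 = -1 :=
    hP ▸ coeff_zero_C_mul_T_comp_linear L _ _
      (Chebyshev.eval_T_real_ne_zero_of_le_neg_one L hle)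
  have hg_eq : g = fun j => P.coeff j * j ! / n ^ j + 1 := funext fun j => by
    rw [hg j]
    split_ifs with hj
    · rfl
    · rw [coeff_eq_zero_of_natDegree_lt (by omega), zero_mul, zero_div, zero_add]
  subst hg_eq
  rw [← Finset.sum_sub_distrib]
  refine Finset.sum_congr rfl fun a _ => ?_
  rw [integral_snd_mul_coeff_factorial_div_pow_add_one hcoeff_zero (by positivity) (hmean a)
    (hint a)]
  ring

/-- Bias formula for the Chebyshev estimator under Poisson sampling.  For each
action a, μ a is the joint law of (n(a), r̂(a)) with n(a) ~ Poi(n π_b(a)) and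
E[r̂(a) 1{n(a)=j}] = P(n(a)=j) r(a) for j ≥ 1 (and r̂(a)=0 when n(a)=0).  Then
E[V̂_C] − V(π_t) = ∑_a π_t(a) r(a) e^{−n π_b(a)} P_L(π_b(a)). -/
theorem chebyshev_estimator_bias
    (k n L : ℕ) (hn : 0 < n)
    (ℓ r' rmax : ℝ) (hℓ : 0 < ℓ) (hlr : ℓ < r') (hrmax : 0 ≤ rmax)
    (πb πt r : Fin k → ℝ)
    (hπb : ∀ a, 0 < πb a) (hπb1 : ∑ a, πb a = 1)
    (hπt : ∀ a, 0 ≤ πt a) (hπt1 : ∑ a, πt a = 1)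
    (P : Polynomial ℝ)
    (hP : P = Polynomial.C
          (-(1 / ((Polynomial.Chebyshev.T ℝ (L : ℤ)).eval ((-r' - ℓ) / (r' - ℓ))))) *
        ((Polynomial.Chebyshev.T ℝ (L : ℤ)).comp
          (Polynomial.C (2 / (r' - ℓ)) * Polynomial.X
            - Polynomial.C ((r' + ℓ) / (r' - ℓ)))))
    (g : ℕ → ℝ)
    (hg : ∀ j, g j =
      if j ≤ L then P.coeff j * (j.factorial : ℝ) / (n : ℝ) ^ j + 1 else 1)
    (μ : Fin k → Measure (ℕ × ℝ)) (hprob : ∀ a, IsProbabilityMeasure (μ a))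
    (hcount : ∀ a (j : ℕ), ((μ a) {p | p.1 = j}).toReal =
      Real.exp (-((n : ℝ) * πb a)) * ((n : ℝ) * πb a) ^ j / (j.factorial : ℝ))
    (hmean : ∀ a (j : ℕ), 1 ≤ j →
      (∫ p in {p : ℕ × ℝ | p.1 = j}, p.2 ∂(μ a)) =
        (Real.exp (-((n : ℝ) * πb a)) * ((n : ℝ) * πb a) ^ j / (j.factorial : ℝ)) * r a)
    (hzero : ∀ a, (∫ p in {p : ℕ × ℝ | p.1 = 0}, p.2 ∂(μ a)) = 0)
    (hint : ∀ a, Integrable (fun p : ℕ × ℝ => p.2 * g p.1) (μ a)) :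
    (∑ a, πt a * ∫ p : ℕ × ℝ, p.2 * g p.1 ∂(μ a)) - (∑ a, πt a * r a)
      = ∑ a, πt a * r a * Real.exp (-((n : ℝ) * πb a)) * P.eval (πb a) :=
  chebyshev_estimator_bias_general k n L hn ℓ r' hℓ hlr πb πt r P hP g hg μ hmean hint
end

section
/- Uniform damping of the scaled Chebyshev polynomial: with P_L(x) = −Q_L((2x−r−ℓ)/(r−ℓ))/Q_L((−r−ℓ)/(r−ℓ)) for 0 < ℓ < r, if the triple (ℓ, r, L) is chosen as ℓ = ν, r = c1 log k / n, L = c0 log k with c1 sufficiently large and c0/c1 sufficiently small, then for all x ≥ ℓ one has |e^{−n x} P_L(x)| ≤ 4·exp(−L·sqrt(ℓ/r)). -/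
set_option maxHeartbeats 1000000

open Polynomial Real

lemma my_cosh_log {a : ℝ} (ha : 0 < a) : Real.cosh (Real.log a) = (a + a⁻¹) / 2 := by
  rw [Real.cosh_eq, Real.exp_log ha, ← Real.exp_log ha, ← Real.exp_neg, Real.exp_log ha,
    Real.exp_neg, Real.exp_log ha]

lemma my_T_cosh (n : ℤ) (t : ℝ) :
    (Polynomial.Chebyshev.T ℝ n).eval (Real.cosh t) = Real.cosh (n * t) := by
  have h : (((Polynomial.Chebyshev.T ℝ n).eval (Real.cosh t) : ℝ) : ℂ)
      = ((Real.cosh ((n : ℝ) * t) : ℝ) : ℂ) := by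
    rw [Polynomial.Chebyshev.complex_ofReal_eval_T, Complex.ofReal_cosh, Complex.ofReal_cosh,
      ← Complex.cos_mul_I, Polynomial.Chebyshev.T_complex_cos, ← Complex.cos_mul_I]
    push_cast
    ring_nf
  exact_mod_cast h

lemma my_abs_T_neg_cosh (n : ℕ) (t : ℝ) :
    |(Polynomial.Chebyshev.T ℝ (n : ℤ)).eval (-Real.cosh t)| = Real.cosh ((n : ℝ) * t) := by
  have h : (((Polynomial.Chebyshev.T ℝ (n : ℤ)).eval (-Real.cosh t) : ℝ) : ℂ)
      = (((-1 : ℝ) ^ n * Real.cosh ((n : ℝ) * t) : ℝ) : ℂ) := by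
    have hθ : -Complex.cosh (t : ℂ) = Complex.cos ((Real.pi : ℂ) + (t : ℂ) * Complex.I) := by
      rw [Complex.cos_add, Complex.cos_mul_I, Complex.sin_mul_I]
      rw [show Complex.cos (Real.pi : ℂ) = ((Real.cos Real.pi : ℝ) : ℂ) by
        rw [Complex.ofReal_cos],
        show Complex.sin (Real.pi : ℂ) = ((Real.sin Real.pi : ℝ) : ℂ) by
        rw [Complex.ofReal_sin]]
      rw [Real.cos_pi, Real.sin_pi]
      push_cast
      ring
    rw [Polynomial.Chebyshev.complex_ofReal_eval_T]
    push_cast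
    rw [hθ, Polynomial.Chebyshev.T_complex_cos]
    have hnθ : ((n : ℤ) : ℂ) * ((Real.pi : ℂ) + (t : ℂ) * Complex.I)
        = ((n * Real.pi : ℝ) : ℂ) + ((n * t : ℝ) : ℂ) * Complex.I := by push_cast; ring
    rw [hnθ, Complex.cos_add, Complex.cos_mul_I, Complex.sin_mul_I]
    rw [show Complex.cos ((n * Real.pi : ℝ) : ℂ) = ((Real.cos (n * Real.pi) : ℝ) : ℂ) by
      rw [Complex.ofReal_cos],
      show Complex.sin ((n * Real.pi : ℝ) : ℂ) = ((Real.sin (n * Real.pi) : ℝ) : ℂ) by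
      rw [Complex.ofReal_sin]]
    rw [Real.sin_nat_mul_pi]
    have hc : Real.cos ((n : ℝ) * Real.pi) = (-1 : ℝ) ^ n := by
      simpa using Real.cos_nat_mul_pi_sub 0 n
    rw [hc]
    push_cast
    ring
  have h2 : (Polynomial.Chebyshev.T ℝ (n : ℤ)).eval (-Real.cosh t)
      = (-1 : ℝ) ^ n * Real.cosh ((n : ℝ) * t) := by exact_mod_cast h
  rw [h2, abs_mul, abs_pow, abs_neg, abs_one, one_pow, one_mul,
    abs_of_nonneg (by positivity : (0:ℝ) ≤ Real.cosh ((n:ℝ) * t))]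

lemma my_abs_T_le_one (n : ℤ) {y : ℝ} (h1 : -1 ≤ y) (h2 : y ≤ 1) :
    |(Polynomial.Chebyshev.T ℝ n).eval y| ≤ 1 := by
  rw [← Real.cos_arccos h1 h2, Polynomial.Chebyshev.T_real_cos]
  exact Real.abs_cos_le_one _

lemma my_arcosh {y : ℝ} (hy : 1 ≤ y) :
    ∃ t : ℝ, 0 ≤ t ∧ Real.cosh t = y ∧ t ≤ Real.log (2 * y) := by
  have hy0 : 0 < y := lt_of_lt_of_le one_pos hy
  have hs : Real.sqrt (y ^ 2 - 1) ^ 2 = y ^ 2 - 1 := Real.sq_sqrt (by nlinarith)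
  have hsn : 0 ≤ Real.sqrt (y ^ 2 - 1) := Real.sqrt_nonneg _
  set a := y + Real.sqrt (y ^ 2 - 1) with ha
  have ha1 : 1 ≤ a := by nlinarith
  have ha0 : 0 < a := lt_of_lt_of_le one_pos ha1
  refine ⟨Real.log a, Real.log_nonneg ha1, ?_, ?_⟩
  · rw [my_cosh_log ha0]
    have hinv : a⁻¹ = y - Real.sqrt (y ^ 2 - 1) := by
      apply inv_eq_of_mul_eq_one_right
      nlinarith
    rw [hinv]; ring
  · apply Real.log_le_log ha0
    have : Real.sqrt (y ^ 2 - 1) ≤ y := by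
      nlinarith [Real.sq_sqrt (show (0:ℝ) ≤ y^2 - 1 by nlinarith), hsn]
    linarith

lemma key_damping (n L : ℕ) (ℓ r : ℝ) (hn : 0 < n) (hℓ : 0 < ℓ) (hlr : ℓ < r)
    (hL8 : (L : ℝ) ≤ (n : ℝ) * r / 8) (x : ℝ) (hx : ℓ ≤ x) :
    |Real.exp (-((n : ℝ) * x)) *
        Polynomial.eval x
          (Polynomial.C
              (-(1 / ((Polynomial.Chebyshev.T ℝ (L : ℤ)).eval ((-r - ℓ) / (r - ℓ))))) *
            ((Polynomial.Chebyshev.T ℝ (L : ℤ)).comp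
              (Polynomial.C (2 / (r - ℓ)) * Polynomial.X - Polynomial.C ((r + ℓ) / (r - ℓ)))))|
      ≤ 4 * Real.exp (-((L : ℝ) * Real.sqrt (ℓ / r))) := by
  have hr : 0 < r := hℓ.trans hlr
  have hD : 0 < r - ℓ := by linarith
  have hn1 : (1 : ℝ) ≤ (n : ℝ) := by exact_mod_cast hn
  have hLnn : (0 : ℝ) ≤ (L : ℝ) := Nat.cast_nonneg _
  set δ := ℓ / r with hδdef
  have hδ0 : 0 < δ := div_pos hℓ hr
  have hδ1 : δ < 1 := (div_lt_one hr).2 hlr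
  set s := Real.sqrt δ with hsdef
  have hs0 : 0 < s := Real.sqrt_pos.2 hδ0
  have hs2 : s ^ 2 = δ := Real.sq_sqrt hδ0.le
  have hs1 : s < 1 := by
    have := Real.sqrt_lt_sqrt hδ0.le hδ1
    rwa [Real.sqrt_one] at this
  set a0 := (1 + s) / (1 - s) with ha0def
  have ha0gt : 1 < a0 := (one_lt_div (by linarith)).2 (by linarith)
  have ha0pos : 0 < a0 := lt_trans one_pos ha0gt
  set t0 := Real.log a0 with ht0def
  have ht0pos : 0 < t0 := Real.log_pos ha0gt
  have hcosh0 : Real.cosh t0 = (1 + δ) / (1 - δ) := by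
    rw [ht0def, my_cosh_log ha0pos, ha0def, inv_div, ← hs2]
    have h1 : (1 : ℝ) - s ≠ 0 := by linarith
    have h2 : (1 : ℝ) + s ≠ 0 := by linarith
    have h3 : (1 : ℝ) - s ^ 2 ≠ 0 := by rw [hs2]; exact ne_of_gt (by linarith)
    field_simp
    ring
  have hy0 : (-r - ℓ) / (r - ℓ) = -Real.cosh t0 := by
    rw [hcosh0, hδdef]
    field_simp
    ring
  have hT0 : |(Polynomial.Chebyshev.T ℝ (L : ℤ)).eval ((-r - ℓ) / (r - ℓ))|
      = Real.cosh ((L : ℝ) * t0) := by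
    rw [hy0]; exact my_abs_T_neg_cosh L t0
  have hcosh1 : (1 : ℝ) ≤ Real.cosh ((L : ℝ) * t0) := Real.one_le_cosh _
  have hcoshpos : (0 : ℝ) < Real.cosh ((L : ℝ) * t0) := lt_of_lt_of_le one_pos hcosh1
  have hcoshge : Real.exp ((L : ℝ) * t0) / 2 ≤ Real.cosh ((L : ℝ) * t0) := by
    rw [Real.cosh_eq]
    have := (Real.exp_pos (-((L : ℝ) * t0))).le
    linarith
  have hinvcosh : 1 / Real.cosh ((L : ℝ) * t0) ≤ 2 * Real.exp (-((L : ℝ) * t0)) := by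
    rw [Real.exp_neg, div_le_iff₀ hcoshpos]
    have he := Real.exp_pos ((L : ℝ) * t0)
    rw [show 2 * (Real.exp ((L:ℝ)*t0))⁻¹ * Real.cosh ((L:ℝ)*t0)
        = 2 * Real.cosh ((L:ℝ)*t0) / Real.exp ((L:ℝ)*t0) by ring, le_div_iff₀ he]
    linarith
  -- t0 ≥ s
  have hts : s ≤ t0 := by
    have h1 : 1 - s ≤ Real.exp (-s) := by have := Real.add_one_le_exp (-s); linarith
    have h2 : Real.log (1 - s) ≤ -s := by
      calc Real.log (1 - s) ≤ Real.log (Real.exp (-s)) :=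
            Real.log_le_log (by linarith) h1
        _ = -s := Real.log_exp _
    have h3 : t0 = Real.log (1 + s) - Real.log (1 - s) := by
      rw [ht0def, ha0def, Real.log_div (by linarith) (by linarith)]
    have h4 : 0 ≤ Real.log (1 + s) := Real.log_nonneg (by linarith)
    linarith
  -- t0 ≥ -log(1-δ)
  have htd : -Real.log (1 - δ) ≤ t0 := by
    rw [← Real.log_inv]
    apply Real.log_le_log (inv_pos.2 (by linarith : (0:ℝ) < 1 - δ))
    rw [ha0def, inv_eq_one_div, div_le_div_iff₀ (by linarith) (by linarith)]
    have hδs : δ = s ^ 2 := hs2.symm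
    nlinarith [sq_nonneg s, hs0.le]
  -- eval simplification
  set yx := (2 * x - r - ℓ) / (r - ℓ) with hyxdef
  have heval : Polynomial.eval x
      ((Polynomial.Chebyshev.T ℝ (L : ℤ)).comp
        (Polynomial.C (2 / (r - ℓ)) * Polynomial.X - Polynomial.C ((r + ℓ) / (r - ℓ))))
      = (Polynomial.Chebyshev.T ℝ (L : ℤ)).eval yx := by
    have harg : Polynomial.eval x
        (Polynomial.C (2 / (r - ℓ)) * Polynomial.X - Polynomial.C ((r + ℓ) / (r - ℓ))) = yx := by
      simp only [Polynomial.eval_sub, Polynomial.eval_mul, Polynomial.eval_C, Polynomial.eval_X]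
      rw [hyxdef]
      field_simp
      ring
    rw [Polynomial.eval_comp, harg]
  rw [Polynomial.eval_mul, Polynomial.eval_C, heval, abs_mul, abs_mul, Real.abs_exp,
    abs_neg, abs_div, abs_one, hT0]
  have hnx : 0 ≤ (n : ℝ) * x := mul_nonneg (by positivity) (hℓ.le.trans hx)
  rcases le_or_gt x r with hxr | hxr
  · -- x ∈ [ℓ, r]
    have hy1 : -1 ≤ yx := by
      rw [hyxdef, le_div_iff₀ hD]; linarith
    have hy2 : yx ≤ 1 := by
      rw [hyxdef, div_le_one hD]; linarith
    have hTle := my_abs_T_le_one (L : ℤ) hy1 hy2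
    have hexp1 : Real.exp (-((n : ℝ) * x)) ≤ 1 := Real.exp_le_one_iff.2 (by linarith)
    calc Real.exp (-((n : ℝ) * x)) *
          (1 / Real.cosh ((L : ℝ) * t0) * |(Polynomial.Chebyshev.T ℝ (L : ℤ)).eval yx|)
        ≤ 1 * (2 * Real.exp (-((L : ℝ) * t0)) * 1) := by
          apply mul_le_mul hexp1 _ (by positivity) one_pos.le
          apply mul_le_mul hinvcosh hTle (abs_nonneg _) (by positivity)
      _ = 2 * Real.exp (-((L : ℝ) * t0)) := by ring
      _ ≤ 2 * Real.exp (-((L : ℝ) * s)) := by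
          have : (L : ℝ) * s ≤ (L : ℝ) * t0 := mul_le_mul_of_nonneg_left hts hLnn
          have := Real.exp_le_exp.2 (neg_le_neg this)
          linarith
      _ ≤ 4 * Real.exp (-((L : ℝ) * s)) := by
          have := (Real.exp_pos (-((L : ℝ) * s))).le
          linarith
  · -- x > r
    have hyx1 : 1 ≤ yx := by
      rw [hyxdef, le_div_iff₀ hD]; linarith
    obtain ⟨t, htnn, hcosht, htle⟩ := my_arcosh hyx1
    have hTeval : |(Polynomial.Chebyshev.T ℝ (L : ℤ)).eval yx| = Real.cosh ((L : ℝ) * t) := by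
      rw [← hcosht, my_T_cosh]
      push_cast
      exact abs_of_nonneg (by positivity)
    have hcoshle : Real.cosh ((L : ℝ) * t) ≤ Real.exp ((L : ℝ) * t) := by
      rw [Real.cosh_eq]
      have h1 : Real.exp (-((L : ℝ) * t)) ≤ Real.exp ((L : ℝ) * t) :=
        Real.exp_le_exp.2 (by
          have : 0 ≤ (L : ℝ) * t := mul_nonneg hLnn htnn
          linarith)
      linarith
    -- the exponent inequality : L*t + L*s ≤ n*x + L*t0
    have hu : (0 : ℝ) < yx * (1 - δ) :=
      mul_pos (lt_of_lt_of_le one_pos hyx1) (by linarith)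
    set u := yx * (1 - δ) with hudef
    have hur : u * r = 2 * x - r - ℓ := by
      rw [hudef, hyxdef, hδdef]
      field_simp
    have hlog2u : Real.log (2 * u) ≤ 2 * u - 1 := Real.log_le_sub_one_of_pos (by linarith)
    have hlogsplit : Real.log (2 * yx) + Real.log (1 - δ) = Real.log (2 * u) := by
      rw [hudef, ← Real.log_mul (by positivity) (ne_of_gt (by linarith)),
        mul_assoc]
    have hstep : t + s - t0 ≤ 2 * u := by
      have hs_le1 : s ≤ 1 := hs1.le
      linarith [hlog2u, hlogsplit, htle, htd]
    have hexpineq : (L : ℝ) * t + (L : ℝ) * s ≤ (n : ℝ) * x + (L : ℝ) * t0 := by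
      have h1 : (L : ℝ) * (t + s - t0) ≤ (L : ℝ) * (2 * u) :=
        mul_le_mul_of_nonneg_left hstep hLnn
      have h2 : (L : ℝ) * (2 * u) ≤ ((n : ℝ) * r / 8) * (2 * u) :=
        mul_le_mul_of_nonneg_right hL8 (by linarith)
      have h3 : ((n : ℝ) * r / 8) * (2 * u) = (n : ℝ) * (u * r) / 4 := by ring
      have h4 : (n : ℝ) * (u * r) / 4 ≤ (n : ℝ) * x := by
        rw [hur]
        have hpos : 0 ≤ (n : ℝ) * (r + ℓ) :=
          mul_nonneg (by positivity) (by linarith)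
        have hsplit : (n : ℝ) * x - (n : ℝ) * (2 * x - r - ℓ) / 4
            = (n : ℝ) * x / 2 + (n : ℝ) * (r + ℓ) / 4 := by ring
        linarith [hsplit, hpos, hnx]
      have h0 : (L : ℝ) * (t + s - t0) = (L : ℝ) * t + (L : ℝ) * s - (L : ℝ) * t0 := by ring
      linarith
    calc Real.exp (-((n : ℝ) * x)) *
          (1 / Real.cosh ((L : ℝ) * t0) * |(Polynomial.Chebyshev.T ℝ (L : ℤ)).eval yx|)
        ≤ Real.exp (-((n : ℝ) * x)) *
            (2 * Real.exp (-((L : ℝ) * t0)) * Real.exp ((L : ℝ) * t)) := by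
          apply mul_le_mul_of_nonneg_left _ (Real.exp_pos _).le
          rw [hTeval]
          apply mul_le_mul hinvcosh hcoshle (by positivity) (by positivity)
      _ = 2 * Real.exp (-((n : ℝ) * x) + -((L : ℝ) * t0) + (L : ℝ) * t) := by
          rw [Real.exp_add, Real.exp_add]; ring
      _ ≤ 2 * Real.exp (-((L : ℝ) * s)) := by
          have : -((n : ℝ) * x) + -((L : ℝ) * t0) + (L : ℝ) * t ≤ -((L : ℝ) * s) := by
            linarith
          have := Real.exp_le_exp.2 this
          linarith
      _ ≤ 4 * Real.exp (-((L : ℝ) * s)) := by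
          have := (Real.exp_pos (-((L : ℝ) * s))).le
          linarith

/-- Uniform damping of the scaled Chebyshev polynomial
P_L(x) = −T_L((2x−r−ℓ)/(r−ℓ))/T_L((−r−ℓ)/(r−ℓ)): with ℓ = ν, r = c1 log k / n,
L = c0 log k, for k and c1 sufficiently large and c0/c1 sufficiently small,
|e^{−nx} P_L(x)| ≤ 4 exp(−L √(ℓ/r)) for all x ≥ ℓ. -/
theorem chebyshev_damping :
    ∃ kmin c1min ρ0 : ℝ, 0 < ρ0 ∧
      ∀ (k n L : ℕ) (ν c0 c1 ℓ r : ℝ),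
        0 < n → kmin ≤ (k : ℝ) → 0 < ν → 0 < c0 → c1min ≤ c1 → c0 / c1 ≤ ρ0 →
        ℓ = ν → r = c1 * Real.log k / (n : ℝ) → (L : ℝ) = c0 * Real.log k →
        ℓ < r →
        ∀ x : ℝ, ℓ ≤ x →
          |Real.exp (-((n : ℝ) * x)) *
              Polynomial.eval x
                (Polynomial.C
                    (-(1 / ((Polynomial.Chebyshev.T ℝ (L : ℤ)).eval
                        ((-r - ℓ) / (r - ℓ))))) *
                  ((Polynomial.Chebyshev.T ℝ (L : ℤ)).comp
                    (Polynomial.C (2 / (r - ℓ)) * Polynomial.X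
                      - Polynomial.C ((r + ℓ) / (r - ℓ)))))|
            ≤ 4 * Real.exp (-((L : ℝ) * Real.sqrt (ℓ / r))) := by
  refine ⟨1, 1, 1/8, by norm_num, ?_⟩
  intro k n L ν c0 c1 ℓ r hn hk hν hc0 hc1 hρ hℓν hr hLdef hlr x hx
  have hℓ : 0 < ℓ := hℓν ▸ hν
  have hc1pos : (0 : ℝ) < c1 := lt_of_lt_of_le one_pos hc1
  have hnpos : (0 : ℝ) < (n : ℝ) := by exact_mod_cast hn
  have hrpos : 0 < r := hℓ.trans hlr
  have hnr : (n : ℝ) * r = c1 * Real.log k := by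
    rw [hr]; field_simp
  have hlogk : 0 < Real.log k := by
    by_contra h
    push_neg at h
    have h1 : (n : ℝ) * r ≤ 0 := by
      rw [hnr]; exact mul_nonpos_of_nonneg_of_nonpos hc1pos.le h
    have h2 : 0 < (n : ℝ) * r := mul_pos hnpos hrpos
    linarith
  have h8 : 8 * c0 ≤ c1 := by
    rw [div_le_div_iff₀ hc1pos (by norm_num : (0:ℝ) < 8)] at hρ
    linarith
  have hL8 : (L : ℝ) ≤ (n : ℝ) * r / 8 := by
    rw [hLdef, hnr, le_div_iff₀ (by norm_num : (0:ℝ) < 8)]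
    have := mul_le_mul_of_nonneg_right h8 hlogk.le
    linarith
  exact key_damping n L ℓ r hn hℓ hlr hL8 x hx
end

section
/- Expected inverse of a positive Poisson/Binomial count: if n(a) is the number of occurrences of an event with probability π_b(a) in n independent trials (or n(a) ~ Poi(n π_b(a))), then E[ 1{n(a) > 0} / n(a) ] ≤ min{ 1, 5/(n π_b(a)) }. -/
/-!
For every `j : ℕ`, `1 / j ≤ min 1 (2 / (j + 1))`; at `j = 0` this holds because `1 / 0 = 0`
in Lean, which is also what makes the indicator `1{n(a) > 0}` disappear. So it suffices to bound
`E[1 / (N + 1)]`, and for both laws this expectation is computed exactly by shifting the count by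
one: `C(n,j) pʲ qⁿ⁻ʲ / (j + 1) = C(n+1,j+1) pʲ⁺¹ qⁿ⁻ʲ / ((n + 1) p)` and
`e^{-λ} λʲ / j! / (j + 1) = e^{-λ} λʲ⁺¹ / (j + 1)! / λ`. This gives
`E[1 / (N + 1)] ≤ 1 / (n p)`, hence `E[1{N > 0} / N] ≤ min 1 (2 / (n p))`.
-/

open Finset Real Nat

noncomputable section

def binomialWeight (n : ℕ) (p : ℝ) (j : ℕ) : ℝ := n.choose j * p ^ j * (1 - p) ^ (n - j)

def poissonWeight (L : ℝ) (j : ℕ) : ℝ := exp (-L) * L ^ j / j !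

lemma one_div_natCast_le_min (j : ℕ) : (1 : ℝ) / j ≤ min 1 (2 / ((j : ℝ) + 1)) := by
  rcases j.eq_zero_or_pos with rfl | hj
  · simp only [CharP.cast_eq_zero, div_zero, zero_add]
    positivity
  · have hj1 : (1 : ℝ) ≤ j := by exact_mod_cast hj
    refine le_min ((div_le_one (by linarith)).2 hj1) ?_
    rw [div_le_div_iff₀ (by linarith) (by linarith)]
    linarith

lemma tsum_mul_one_div_le {w : ℕ → ℝ} {c : ℝ} (hw : ∀ j, 0 ≤ w j) (h1 : HasSum w 1)
    (hc : HasSum (fun j ↦ w j / (j + 1)) c) : ∑' j, w j * (1 / j) ≤ min 1 (2 * c) := by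
  have hle (j : ℕ) : w j * (1 / j) ≤ w j * min 1 (2 / ((j : ℝ) + 1)) :=
    mul_le_mul_of_nonneg_left (one_div_natCast_le_min j) (hw j)
  have hle_one (j : ℕ) : w j * (1 / j) ≤ w j :=
    (hle j).trans (mul_le_of_le_one_right (hw j) (min_le_left _ _))
  have hle_two (j : ℕ) : w j * (1 / j) ≤ w j * (2 / ((j : ℝ) + 1)) :=
    (hle j).trans (mul_le_mul_of_nonneg_left (min_le_right _ _) (hw j))
  have hsum : Summable fun j : ℕ ↦ w j * (1 / j) :=
    h1.summable.of_nonneg_of_le (fun j ↦ by have := hw j; positivity) hle_one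
  have h2 : HasSum (fun j : ℕ ↦ w j * (2 / (j + 1))) (2 * c) := by
    convert! hc.mul_left 2 using 1
    funext j
    ring
  exact le_min ((hsum.tsum_le_tsum hle_one h1.summable).trans_eq h1.tsum_eq)
    ((hsum.tsum_le_tsum hle_two h2.summable).trans_eq h2.tsum_eq)

lemma tsum_ite_one_le_mul_one_div (f : ℕ → ℝ) :
    (∑' j : ℕ, if 1 ≤ j then f j * (1 / j) else 0) = ∑' j : ℕ, f j * (1 / j) := by
  refine tsum_congr fun j ↦ ?_
  split_ifs with hj
  · rfl
  · simp [Nat.lt_one_iff.1 (not_le.1 hj)]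

section Binomial

variable {n : ℕ} {p : ℝ}

lemma binomialWeight_nonneg (hp : 0 ≤ p) (hp1 : p ≤ 1) (j : ℕ) : 0 ≤ binomialWeight n p j := by
  have := sub_nonneg.2 hp1
  unfold binomialWeight
  positivity

lemma binomialWeight_eq_zero_of_lt {j : ℕ} (h : n < j) : binomialWeight n p j = 0 := by
  simp [binomialWeight, Nat.choose_eq_zero_of_lt h]

lemma sum_binomialWeight (n : ℕ) (p : ℝ) : ∑ j ∈ range (n + 1), binomialWeight n p j = 1 := by
  have h := (add_pow p (1 - p) n).symm
  rw [add_sub_cancel, one_pow] at h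
  rw [← h]
  exact sum_congr rfl fun j _ ↦ by rw [binomialWeight]; ring

lemma hasSum_binomialWeight (n : ℕ) (p : ℝ) : HasSum (binomialWeight n p) 1 :=
  sum_binomialWeight n p ▸ hasSum_sum_of_ne_finset_zero fun _ hj ↦
    binomialWeight_eq_zero_of_lt (by simpa [Nat.lt_succ_iff] using hj)

lemma binomialWeight_div_succ (hp : p ≠ 0) (n j : ℕ) :
    binomialWeight n p j / (j + 1) = binomialWeight (n + 1) p (j + 1) / ((n + 1) * p) := by
  have hchoose : ((n : ℝ) + 1) * n.choose j = (n + 1).choose (j + 1) * ((j : ℝ) + 1) := by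
    exact_mod_cast Nat.add_one_mul_choose_eq n j
  simp only [binomialWeight, Nat.add_sub_add_right]
  field_simp
  linear_combination (p * p ^ j * (1 - p) ^ (n - j)) * hchoose

lemma hasSum_binomialWeight_div_succ (hp : p ≠ 0) (n : ℕ) :
    HasSum (fun j : ℕ ↦ binomialWeight n p j / (j + 1))
      ((1 - (1 - p) ^ (n + 1)) / ((n + 1) * p)) := by
  simp_rw [binomialWeight_div_succ hp]
  convert! (hasSum_nat_add_iff' 1).2 ((hasSum_binomialWeight (n + 1) p).div_const ((n + 1) * p))
    using 1
  simp [binomialWeight, sub_div]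

lemma sum_Icc_binomialWeight_mul_one_div (n : ℕ) (p : ℝ) :
    ∑ j ∈ Icc 1 n, (n.choose j : ℝ) * p ^ j * (1 - p) ^ (n - j) * (1 / (j : ℝ))
      = ∑' j : ℕ, binomialWeight n p j * (1 / j) := by
  refine (tsum_eq_sum fun j hj ↦ ?_).symm
  rcases Nat.eq_zero_or_pos j with rfl | hj0
  · simp
  · rw [mem_Icc] at hj
    rw [← binomialWeight, binomialWeight_eq_zero_of_lt (by omega), zero_mul]

end Binomial

section Poisson

variable {L : ℝ}

lemma poissonWeight_nonneg (hL : 0 ≤ L) (j : ℕ) : 0 ≤ poissonWeight L j := by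
  unfold poissonWeight
  positivity

lemma hasSum_poissonWeight (L : ℝ) : HasSum (poissonWeight L) 1 := by
  convert! (NormedSpace.expSeries_div_hasSum_exp L).mul_left (exp (-L)) using 1
  · funext j
    rw [poissonWeight, mul_div_assoc]
  · simp [← exp_eq_exp_ℝ, ← exp_add]

lemma poissonWeight_div_succ (hL : L ≠ 0) (j : ℕ) :
    poissonWeight L j / (j + 1) = poissonWeight L (j + 1) / L := by
  simp only [poissonWeight, Nat.factorial_succ, pow_succ]
  push_cast
  field_simp

lemma hasSum_poissonWeight_div_succ (hL : L ≠ 0) :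
    HasSum (fun j : ℕ ↦ poissonWeight L j / (j + 1)) ((1 - exp (-L)) / L) := by
  simp_rw [poissonWeight_div_succ hL]
  convert! (hasSum_nat_add_iff' 1).2 ((hasSum_poissonWeight L).div_const L) using 1
  simp [poissonWeight, sub_div]

end Poisson

/-- Expected inverse of a positive Binomial (resp. Poisson) count:
E[1{n(a)>0}/n(a)] ≤ min{1, 5/(nπ_b(a))}, stated via the explicit Binomial and
Poisson probability mass functions. -/
theorem inv_count_expectation_bound
    (n : ℕ) (hn : 0 < n) (p : ℝ) (hp : 0 < p) (hp1 : p ≤ 1) :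
    (∑ j ∈ Finset.Icc 1 n,
        (n.choose j : ℝ) * p ^ j * (1 - p) ^ (n - j) * (1 / (j : ℝ)))
      ≤ min 1 (5 / ((n : ℝ) * p))
    ∧ (∑' j : ℕ, if 1 ≤ j then
          Real.exp (-((n : ℝ) * p)) * ((n : ℝ) * p) ^ j / (j.factorial : ℝ)
            * (1 / (j : ℝ))
        else 0)
      ≤ min 1 (5 / ((n : ℝ) * p)) := by
  have hnp : 0 < (n : ℝ) * p := by positivity
  have two_mul_le_five {c : ℝ} (hc : c ≤ 1 / (n * p)) : 2 * c ≤ 5 / (n * p) := by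
    calc 2 * c ≤ 2 * (1 / (n * p)) := by gcongr
      _ ≤ 5 * (1 / (n * p)) := by gcongr; norm_num
      _ = 5 / (n * p) := mul_one_div _ _
  rw [sum_Icc_binomialWeight_mul_one_div, tsum_ite_one_le_mul_one_div]
  constructor
  · refine (tsum_mul_one_div_le (binomialWeight_nonneg hp.le hp1) (hasSum_binomialWeight n p)
      (hasSum_binomialWeight_div_succ hp.ne' n)).trans (min_le_min_left _ (two_mul_le_five ?_))
    have := pow_nonneg (sub_nonneg.2 hp1) (n + 1)
    exact div_le_div₀ zero_le_one (by linarith) hnp (by nlinarith)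
  · refine (tsum_mul_one_div_le (poissonWeight_nonneg hnp.le) (hasSum_poissonWeight _)
      (hasSum_poissonWeight_div_succ hnp.ne')).trans (min_le_min_left _ (two_mul_le_five ?_))
    exact div_le_div_of_nonneg_right (sub_le_self _ (exp_pos _).le) hnp.le
end
end
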